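/- arXiv:1903.06977 — 7 statements merged into one kernel-verified Lean document; each statement's English description precedes it below -/
import Mathlib

section
/- Let T be the doubling map on [0,1) and μ Lebesgue measure. Let (B_m)_{m≥1} be a nested sequence of intervals with a fixed center whose lengths tend to 0. If there is a constant c ∈ ℝ such that μ(B_m) ≤ c/m for all m, then the set E_ah of eventually always hitting points has μ(E_ah) = 0. -/
/-!
Let `E` be the set of eventually always hitting points and `E_{m₀} ⊆ E` the set of points that,
for every `m ≥ m₀`, hit `B m` before time `m`. Given `m₀`, take `m ≥ m₀` with `c / m` small, cover
`B m` by two adjacent dyadic intervals of length `2⁻ˢ ≈ c / m`, and let `S` be the set of points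
whose first `m` iterates avoid them. Then `S` is disjoint from `E_{m₀}`. Off a null set, every
`x ∈ E_{m₀}` also has `Tⁿ x ∈ E` for `n = m + s`: a hit at a fixed time `j < n` can persist for all
`m` only if `Tʲ x ∈ ⋂ₘ B m`, a null set. Membership in `S` depends only on the first `n` binary
digits, which are independent of `Tⁿ x`, so `μ E_{m₀} + μ S * μ E ≤ μ (T⁻ⁿ E) = μ E`.
Since `μ S_{i+1} ≥ μ S_i - μ S_{i-s} * μ J` for the survivor sets `S_i` of the two intervals `J`,
`μ S ≥ exp (-16 c)` uniformly in `m`, and letting `m₀ → ∞` forces `μ E = 0`.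
-/

open MeasureTheory Filter Set

/-- The set of eventually always hitting points: there is `m₀` such that for every
`m ≥ m₀` the orbit segment `x, T x, …, T^[m-1] x` meets `B m`. -/
def eahSet {X : Type*} (T : X → X) (B : ℕ → Set X) : Set X :=
  {x | ∃ m₀ : ℕ, ∀ m : ℕ, m₀ ≤ m → ∃ k : ℕ, k < m ∧ T^[k] x ∈ B m}

/-- The doubling map `x ↦ 2x mod 1`. -/
noncomputable def doubling : ℝ → ℝ := fun x => Int.fract (2 * x)

open scoped ENNReal

open Function

namespace EventuallyAlwaysHitting

variable {X : Type*} {T : X → X} {B : ℕ → Set X}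

def survivors (T : X → X) (J : Set X) (i : ℕ) : Set X := {x | ∀ j < i, T^[j] x ∉ J}

lemma survivors_mono {J J' : Set X} (h : J ⊆ J') (i : ℕ) : survivors T J' i ⊆ survivors T J i :=
  fun _ hx j hj hxJ => hx j hj (h hxJ)

lemma survivors_antitone (J : Set X) : Antitone (survivors T J) :=
  fun _ _ h _ hx j hj => hx j (hj.trans_le h)

@[simp]
lemma survivors_zero (J : Set X) : survivors T J 0 = univ := by
  ext; simp [survivors]

def eahSetFrom (T : X → X) (B : ℕ → Set X) (m₀ : ℕ) : Set X :=
  {x | ∀ m ≥ m₀, ∃ k < m, T^[k] x ∈ B m}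

lemma monotone_eahSetFrom : Monotone (eahSetFrom T B) :=
  fun _ _ h _ hx m hm => hx m (h.trans hm)

lemma eahSet_eq_iUnion_eahSetFrom : eahSet T B = ⋃ m₀, eahSetFrom T B m₀ := by
  ext; simp [eahSet, eahSetFrom]

lemma mem_eahSet_iff {x : X} : x ∈ eahSet T B ↔ ∀ᶠ m in atTop, ∃ k < m, T^[k] x ∈ B m :=
  eventually_atTop.symm

lemma iterate_mem_eahSet (hB : Antitone B) {x : X} {m₀ n : ℕ}
    (hx : x ∈ eahSetFrom T B m₀) (hxn : ∀ j < n, T^[j] x ∉ ⋂ m, B m) :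
    T^[n] x ∈ eahSet T B := by
  have hleave : ∀ᶠ m in atTop, ∀ j < n, T^[j] x ∉ B m := by
    refine (eventually_all_finite (finite_lt_nat n)).2 fun j hj => ?_
    obtain ⟨M, hM⟩ : ∃ M, T^[j] x ∉ B M := by simpa using hxn j hj
    exact eventually_atTop.2 ⟨M, fun m hm hmem => hM (hB hm hmem)⟩
  rw [mem_eahSet_iff]
  filter_upwards [hleave, eventually_ge_atTop m₀] with m hm hm₀
  obtain ⟨k, hk, hkB⟩ := hx m hm₀
  have hnk : n ≤ k := not_lt.1 fun hkn => hm k hkn hkB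
  refine ⟨k - n, by omega, ?_⟩
  rwa [← iterate_add_apply, Nat.sub_add_cancel hnk]

section Measure

variable [MeasurableSpace X] {μ : Measure X}

lemma measurableSet_survivors (hT : Measurable T) {J : Set X} (hJ : MeasurableSet J) (i : ℕ) :
    MeasurableSet (survivors T J i) := by
  refine measurableSet_setOfPred.2 <| .forall fun j => .imp measurable_const ?_
  exact (hJ.mem.comp (hT.iterate j)).not

lemma measurableSet_eahSet (hT : Measurable T) (hB : ∀ m, MeasurableSet (B m)) :
    MeasurableSet (eahSet T B) := by
  refine measurableSet_setOfPred.2 <| .exists fun m₀ => .forall fun m => .imp measurable_const <|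
    .exists fun k => .and measurable_const ((hB m).mem.comp (hT.iterate k))

lemma measure_eahSetFrom_add_measure_survivors_inter_le (hT : MeasurePreserving T μ μ)
    (hB : Antitone B) (hBm : ∀ m, MeasurableSet (B m)) (hB0 : μ (⋂ m, B m) = 0) {m₀ m : ℕ}
    (hm : m₀ ≤ m) (n : ℕ) : μ (eahSetFrom T B m₀)
      + μ (survivors T (B m) m ∩ T^[n] ⁻¹' eahSet T B) ≤ μ (eahSet T B) := by
  set E := eahSet T B
  set Y := ⋃ j < n, T^[j] ⁻¹' ⋂ m, B m
  have hY : μ Y = 0 := (measure_biUnion_null_iff (to_countable _)).2 fun j _ =>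
    (hT.iterate j).quasiMeasurePreserving.preimage_null hB0
  have hsub : eahSetFrom T B m₀ \ Y ⊆ T^[n] ⁻¹' E \ survivors T (B m) m := by
    rintro x ⟨hx, hxY⟩
    simp only [Y, mem_iUnion, mem_preimage, not_exists] at hxY
    refine ⟨iterate_mem_eahSet hB hx hxY, fun hxS => ?_⟩
    obtain ⟨k, hk, hkB⟩ := hx m hm
    exact hxS k hk hkB
  calc μ (eahSetFrom T B m₀) + μ (survivors T (B m) m ∩ T^[n] ⁻¹' E)
      = μ (eahSetFrom T B m₀ \ Y)
          + μ (T^[n] ⁻¹' E ∩ survivors T (B m) m) := by rw [measure_sdiff_null hY, inter_comm]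
    _ ≤ μ (T^[n] ⁻¹' E ∩ survivors T (B m) m) + μ (T^[n] ⁻¹' E \ survivors T (B m) m) := by
      rw [add_comm]; gcongr
    _ = μ E := by
      rw [measure_inter_add_sdiff _ (measurableSet_survivors hT.measurable (hBm m) m),
        (hT.iterate n).measure_preimage (measurableSet_eahSet hT.measurable hBm).nullMeasurableSet]

lemma measure_iInter_eq_zero_of_le_div {c : ℝ}
    (h : ∀ m : ℕ, 1 ≤ m → μ (B m) ≤ ENNReal.ofReal (c / m)) : μ (⋂ m, B m) = 0 := by
  refine le_antisymm (ge_of_tendsto ?_ (eventually_atTop.2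
    ⟨1, fun m hm => (measure_mono (iInter_subset B m)).trans (h m hm)⟩)) zero_le
  simpa using ENNReal.tendsto_ofReal (tendsto_const_div_atTop_nhds_zero_nat c)

theorem measure_eahSet_eq_zero [IsFiniteMeasure μ] (hT : MeasurePreserving T μ μ)
    (hB : Antitone B) (hBm : ∀ m, MeasurableSet (B m)) (hB0 : μ (⋂ m, B m) = 0)
    {δ : ℝ≥0∞} (hδ : δ ≠ 0) (h : ∀ m₀, ∃ m ≥ m₀, ∃ n,
      δ * μ (eahSet T B) ≤ μ (survivors T (B m) m ∩ T^[n] ⁻¹' eahSet T B)) :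
    μ (eahSet T B) = 0 := by
  set E := eahSet T B
  have hle : μ E + δ * μ E ≤ μ E + 0 := by
    calc μ E + δ * μ E = ⨆ m₀, (μ (eahSetFrom T B m₀) + δ * μ E) := by
          rw [← ENNReal.iSup_add, ← monotone_eahSetFrom.measure_iUnion,
            ← eahSet_eq_iUnion_eahSetFrom]
      _ ≤ μ E + 0 := by
        rw [add_zero]
        refine iSup_le fun m₀ => ?_
        obtain ⟨m, hm, n, hn⟩ := h m₀
        exact (add_le_add le_rfl hn).trans
          (measure_eahSetFrom_add_measure_survivors_inter_le hT hB hBm hB0 hm n)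
  have := ENNReal.le_of_add_le_add_left (measure_ne_top μ E) hle
  exact (mul_eq_zero.1 (nonpos_iff_eq_zero.1 this)).resolve_left hδ

end Measure

lemma one_sub_pow_mul_le {b : ℕ → ℝ} {p q : ℝ} {s : ℕ} (hq0 : 0 ≤ q) (hq1 : q ≤ 1)
    (hpq : p ≤ q * (1 - q) ^ s) (hb : ∀ i, 0 ≤ b i)
    (hrec : ∀ i, b i ≤ b (i + 1) + p * b (i - s)) (i : ℕ) : (1 - q) ^ i * b 0 ≤ b i := by
  suffices h : ∀ i, ∀ j ≤ i, (1 - q) ^ (i - j) * b j ≤ b i by simpa using h i 0 (Nat.zero_le _)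
  intro i
  induction i with
  | zero => intro j hj; simp [Nat.le_zero.1 hj]
  | succ i ih =>
    have step : (1 - q) * b i ≤ b (i + 1) := by
      have h1 : (1 - q) ^ s * b (i - s) ≤ b i :=
        (mul_le_mul_of_nonneg_right (pow_le_pow_of_le_one (by linarith) (by linarith)
          (by omega : i - (i - s) ≤ s)) (hb _)).trans (ih _ (Nat.sub_le i s))
      have h2 : p * b (i - s) ≤ q * b i :=
        calc p * b (i - s) ≤ q * (1 - q) ^ s * b (i - s) := mul_le_mul_of_nonneg_right hpq (hb _)
          _ = q * ((1 - q) ^ s * b (i - s)) := mul_assoc _ _ _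
          _ ≤ q * b i := mul_le_mul_of_nonneg_left h1 hq0
      linarith [hrec i]
    intro j hj
    rcases hj.eq_or_lt with rfl | hj
    · simp
    · calc (1 - q) ^ (i + 1 - j) * b j = (1 - q) * ((1 - q) ^ (i - j) * b j) := by
            rw [Nat.succ_sub (by omega), pow_succ']; ring
        _ ≤ (1 - q) * b i := mul_le_mul_of_nonneg_left (ih j (by omega)) (by linarith)
        _ ≤ b (i + 1) := step

lemma half_le_one_sub_four_div_pow {s : ℕ} (hs : 6 ≤ s) : (1 / 2 : ℝ) ≤ (1 - 4 / 2 ^ s) ^ s := by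
  have h8s : (8 * s : ℝ) ≤ 2 ^ s := by
    obtain ⟨t, rfl⟩ := Nat.exists_eq_add_of_le hs
    have ht := Nat.lt_two_pow_self (n := t)
    have : 8 * (6 + t) ≤ 2 ^ (6 + t) := by rw [pow_add]; omega
    exact_mod_cast this
  have hbern := one_add_le_pow_of_two_add_nonneg (a := -(4 / 2 ^ s : ℝ)) ?_ s
  · have : (s : ℝ) * (4 / 2 ^ s) ≤ 1 / 2 := by
      rw [mul_div_assoc', div_le_iff₀ (by positivity)]; linarith
    rw [← sub_eq_add_neg] at hbern
    linarith
  · have : (4 / 2 ^ s : ℝ) ≤ 2 := by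
      have : (6 : ℝ) ≤ s := by exact_mod_cast hs
      rw [div_le_iff₀ (by positivity)]; linarith
    linarith

lemma exp_neg_two_mul_le_one_sub {q : ℝ} (hq0 : 0 ≤ q) (hq : q ≤ 1 / 2) :
    Real.exp (-(2 * q)) ≤ 1 - q := by
  rw [Real.exp_neg, inv_le_comm₀ (Real.exp_pos _) (by linarith)]
  calc (1 - q)⁻¹ ≤ 1 + 2 * q := by
        rw [inv_le_iff_one_le_mul₀ (by linarith)]; nlinarith
    _ ≤ Real.exp (2 * q) := by linarith [Real.add_one_le_exp (2 * q)]

lemma exists_two_pow_near {c : ℝ} {m : ℕ} (hc : 0 < c) (hm : 64 * c ≤ m) :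
    ∃ s : ℕ, 6 ≤ s ∧ c / m ≤ 1 / 2 ^ s ∧ 8 * m / 2 ^ s ≤ 16 * c := by
  have hm0 : (0 : ℝ) < m := by linarith
  obtain ⟨s, hlt, hle⟩ := exists_nat_pow_near_of_lt_one (div_pos hc hm0)
    ((div_le_one hm0).2 (by linarith)) (one_half_pos (α := ℝ)) one_half_lt_one
  have h64 : c / m ≤ (1 / 2) ^ 6 := by
    rw [div_le_iff₀ hm0]; linarith
  refine ⟨s, ?_, by rwa [← one_div_pow], ?_⟩
  · have := (pow_lt_pow_iff_right_of_lt_one₀ one_half_pos one_half_lt_one).1 (hlt.trans_le h64)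
    omega
  · rw [lt_div_iff₀ hm0, one_div_pow, pow_succ, one_div_mul_eq_div,
      div_lt_iff₀ (by positivity)] at hlt
    rw [div_le_iff₀ (by positivity)]
    linarith

section Doubling

local notation "μ" => volume.restrict (Ico (0 : ℝ) 1)

instance isProbabilityMeasure_restrict_Ico_zero_one : IsProbabilityMeasure μ := ⟨by simp⟩

lemma volume_preimage_mul_sub {a : ℝ} (ha : a ≠ 0) (b : ℝ) (G : Set ℝ) :
    volume ((fun x => a * x - b) ⁻¹' G) = ENNReal.ofReal |a⁻¹| * volume G := by
  have h : (fun x => a * x - b) = (fun y => y + -b) ∘ (a * ·) := by ext; simp [sub_eq_add_neg]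
  rw [h, preimage_comp, Real.volume_preimage_mul_left ha, measure_preimage_add_right]

lemma measurable_doubling : Measurable doubling :=
  measurable_fract.comp (measurable_const_mul 2)

lemma doubling_iterate_fract (k : ℕ) (x : ℝ) :
    doubling^[k] (Int.fract x) = Int.fract (2 ^ k * x) := by
  induction k generalizing x with
  | zero => simp
  | succ k ih =>
    have h : doubling (Int.fract x) = Int.fract (2 * x) := by
      have h2 : 2 * (x - ⌊x⌋) = 2 * x - ((2 * ⌊x⌋ : ℤ) : ℝ) := by push_cast; ring
      rw [doubling, ← Int.self_sub_floor x, h2, Int.fract_sub_intCast]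
    rw [iterate_succ_apply, h, ih, ← mul_assoc, ← pow_succ]

lemma doubling_iterate_of_mem {x : ℝ} (hx : x ∈ Ico (0 : ℝ) 1) (k : ℕ) :
    doubling^[k] x = Int.fract (2 ^ k * x) := by
  simpa [Int.fract_eq_self.2 hx] using doubling_iterate_fract k x

lemma doubling_iterate_mem_Ico {x : ℝ} (hx : x ∈ Ico (0 : ℝ) 1) (k : ℕ) :
    doubling^[k] x ∈ Ico (0 : ℝ) 1 := by
  rw [doubling_iterate_of_mem hx]
  exact ⟨Int.fract_nonneg _, Int.fract_lt_one _⟩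

def dyadicInterval (t : ℕ) (j : ℤ) : Set ℝ := Ico (j / 2 ^ t) ((j + 1) / 2 ^ t)

lemma mem_dyadicInterval_iff {t : ℕ} {j : ℤ} {x : ℝ} :
    x ∈ dyadicInterval t j ↔ ⌊(2 : ℝ) ^ t * x⌋ = j := by
  rw [dyadicInterval, mem_Ico, Int.floor_eq_iff, div_le_iff₀' (by positivity),
    lt_div_iff₀' (by positivity)]

lemma mem_dyadicInterval_iff_sub_mem {t : ℕ} {j : ℤ} {x : ℝ} :
    x ∈ dyadicInterval t j ↔ 2 ^ t * x - j ∈ Ico (0 : ℝ) 1 := by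
  rw [mem_dyadicInterval_iff, Int.floor_eq_iff, mem_Ico, sub_nonneg, sub_lt_iff_lt_add']

lemma dyadicInterval_subset_Ico {t : ℕ} {j : ℤ} (hj : j ∈ Finset.Ico 0 (2 ^ t)) :
    dyadicInterval t j ⊆ Ico (0 : ℝ) 1 := by
  intro x hx
  rw [mem_dyadicInterval_iff] at hx
  rw [Finset.mem_Ico, ← hx, Int.floor_nonneg, Int.floor_lt] at hj
  push_cast at hj
  constructor <;> nlinarith [pow_pos (two_pos (α := ℝ)) t]

lemma div_mem_dyadicInterval (t : ℕ) (j : ℤ) : (j : ℝ) / 2 ^ t ∈ dyadicInterval t j :=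
  ⟨le_rfl, div_lt_div_of_pos_right (lt_add_one _) (by positivity)⟩

lemma floor_two_pow_mul_mem_Ico {x : ℝ} (hx : x ∈ Ico (0 : ℝ) 1) (t : ℕ) :
    ⌊(2 : ℝ) ^ t * x⌋ ∈ Finset.Ico 0 (2 ^ t) := by
  rw [Finset.mem_Ico, Int.floor_nonneg, Int.floor_lt]
  push_cast
  constructor <;> nlinarith [hx.1, hx.2, pow_pos (two_pos (α := ℝ)) t]

lemma pairwise_disjoint_dyadicInterval (t : ℕ) : Pairwise (Disjoint on dyadicInterval t) :=
  fun i j hij => disjoint_left.2 fun x hi hj =>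
    hij (by rw [← mem_dyadicInterval_iff.1 hi, ← mem_dyadicInterval_iff.1 hj])

lemma volume_dyadicInterval (t : ℕ) (j : ℤ) :
    volume (dyadicInterval t j) = ENNReal.ofReal (1 / 2 ^ t) := by
  rw [dyadicInterval, Real.volume_Ico]
  ring_nf

lemma floor_two_pow_mul_eq_div {t t' : ℕ} (h : t ≤ t') (x : ℝ) :
    ⌊(2 : ℝ) ^ t * x⌋ = ⌊(2 : ℝ) ^ t' * x⌋ / (2 ^ (t' - t) : ℕ) := by
  rw [← Int.floor_div_natCast]
  congr 1
  rw [eq_div_iff (by positivity), Nat.cast_pow, Nat.cast_ofNat, mul_right_comm, ← pow_add,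
    Nat.add_sub_cancel' h]

lemma dyadicInterval_inter_preimage_doubling_iterate {n : ℕ} {j : ℤ}
    (hj : j ∈ Finset.Ico 0 (2 ^ n)) (F : Set ℝ) :
    dyadicInterval n j ∩ doubling^[n] ⁻¹' F = (fun x : ℝ => 2 ^ n * x - j) ⁻¹' (F ∩ Ico 0 1) := by
  ext x
  simp only [mem_inter_iff, mem_preimage]
  rw [and_comm (a := _ ∈ F), ← mem_dyadicInterval_iff_sub_mem]
  refine and_congr_right fun hx => ?_
  rw [doubling_iterate_of_mem (dyadicInterval_subset_Ico hj hx), Int.fract,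
    mem_dyadicInterval_iff.1 hx]

/-- `S ∩ [0,1)` is a union of dyadic intervals of length `2⁻ᵗ`. -/
def IsDyadicUnion (t : ℕ) (S : Set ℝ) : Prop :=
  ∀ x ∈ Ico (0 : ℝ) 1, ∀ z ∈ Ico (0 : ℝ) 1, ⌊(2 : ℝ) ^ t * x⌋ = ⌊(2 : ℝ) ^ t * z⌋ → (x ∈ S ↔ z ∈ S)

namespace IsDyadicUnion

variable {s t : ℕ} {S : Set ℝ}

lemma mono (hS : IsDyadicUnion t S) {t' : ℕ} (h : t ≤ t') : IsDyadicUnion t' S :=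
  fun x hx z hz hxz => hS x hx z hz <| by
    rw [floor_two_pow_mul_eq_div h, floor_two_pow_mul_eq_div h z, hxz]

lemma preimage_doubling_iterate (hS : IsDyadicUnion s S) (i : ℕ) :
    IsDyadicUnion (i + s) (doubling^[i] ⁻¹' S) := by
  have floor_eq : ∀ x ∈ Ico (0 : ℝ) 1, ⌊(2 : ℝ) ^ s * doubling^[i] x⌋
      = ⌊(2 : ℝ) ^ (i + s) * x⌋ - 2 ^ s * ⌊(2 : ℝ) ^ i * x⌋ := by
    intro x hx
    rw [doubling_iterate_of_mem hx, ← Int.self_sub_floor, ← Int.floor_sub_intCast]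
    push_cast
    ring_nf
  intro x hx z hz hxz
  have hi : ⌊(2 : ℝ) ^ i * x⌋ = ⌊(2 : ℝ) ^ i * z⌋ := by
    rw [floor_two_pow_mul_eq_div (Nat.le_add_right i s), hxz,
      ← floor_two_pow_mul_eq_div (Nat.le_add_right i s)]
  exact hS _ (doubling_iterate_mem_Ico hx i) _ (doubling_iterate_mem_Ico hz i)
    (by rw [floor_eq x hx, floor_eq z hz, hxz, hi])

lemma survivors_sub (hS : IsDyadicUnion s S) (i : ℕ) :
    IsDyadicUnion i (survivors doubling S (i - s)) :=
  fun x hx z hz hxz => forall₂_congr fun j hj =>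
    not_congr ((hS.preimage_doubling_iterate j).mono (by omega) x hx z hz hxz)

open scoped Classical in
lemma inter_Ico_eq_biUnion (hS : IsDyadicUnion t S) :
    S ∩ Ico 0 1 = ⋃ j ∈ (Finset.Ico (0 : ℤ) (2 ^ t)).filter fun j : ℤ => (j : ℝ) / 2 ^ t ∈ S,
      dyadicInterval t j := by
  ext x
  simp only [mem_inter_iff, mem_iUnion, Finset.mem_filter, exists_prop]
  constructor
  · rintro ⟨hxS, hx⟩
    have hj := floor_two_pow_mul_mem_Ico hx t
    have hxj : x ∈ dyadicInterval t ⌊(2 : ℝ) ^ t * x⌋ := mem_dyadicInterval_iff.2 rfl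
    have hendpoint := div_mem_dyadicInterval t ⌊(2 : ℝ) ^ t * x⌋
    refine ⟨_, ⟨hj, (hS x hx _ (dyadicInterval_subset_Ico hj hendpoint) ?_).1 hxS⟩, hxj⟩
    rw [mem_dyadicInterval_iff.1 hendpoint]
  · rintro ⟨j, ⟨hj, hjS⟩, hxj⟩
    have hendpoint := div_mem_dyadicInterval t j
    have hx := dyadicInterval_subset_Ico hj hxj
    refine ⟨(hS _ (dyadicInterval_subset_Ico hj hendpoint) x hx ?_).1 hjS, hx⟩
    rw [mem_dyadicInterval_iff.1 hendpoint, mem_dyadicInterval_iff.1 hxj]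

end IsDyadicUnion

lemma isDyadicUnion_univ (t : ℕ) : IsDyadicUnion t univ :=
  fun _ _ _ _ _ => Iff.rfl

lemma isDyadicUnion_dyadicInterval_union (s : ℕ) (k : ℤ) :
    IsDyadicUnion s (dyadicInterval s k ∪ dyadicInterval s (k + 1)) :=
  fun x _ z _ hxz => by simp only [mem_union, mem_dyadicInterval_iff, hxz]

open scoped Classical in
theorem measure_inter_preimage_doubling_iterate {n : ℕ} {S F : Set ℝ} (hS : IsDyadicUnion n S)
    (hF : MeasurableSet F) : μ (S ∩ doubling^[n] ⁻¹' F) = μ S * μ F := by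
  set A := (Finset.Ico (0 : ℤ) (2 ^ n)).filter fun j : ℤ => (j : ℝ) / 2 ^ n ∈ S
  have hA : ∀ j ∈ A, j ∈ Finset.Ico 0 (2 ^ n) := fun j hj => (Finset.mem_filter.1 hj).1
  -- `doubling^[n]` maps each dyadic interval of level `n` affinely onto `[0,1)`; taking
  -- `G = univ` identifies the constant factor as `μ S`.
  have key : ∀ G, MeasurableSet G →
      μ (S ∩ doubling^[n] ⁻¹' G) = (∑ _j ∈ A, ENNReal.ofReal |((2 : ℝ) ^ n)⁻¹|) * μ G := by
    intro G hG
    rw [Measure.restrict_apply' measurableSet_Ico, inter_right_comm, hS.inter_Ico_eq_biUnion,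
      iUnion₂_inter, measure_biUnion_finset, Finset.sum_mul]
    · refine Finset.sum_congr rfl fun j hj => ?_
      rw [dyadicInterval_inter_preimage_doubling_iterate (hA j hj),
        volume_preimage_mul_sub (by positivity), Measure.restrict_apply' measurableSet_Ico]
    · exact fun i _ j _ hij =>
        (pairwise_disjoint_dyadicInterval n hij).mono inter_subset_left inter_subset_left
    · intro j hj
      rw [dyadicInterval_inter_preimage_doubling_iterate (hA j hj)]
      exact (hG.inter measurableSet_Ico).preimage (by fun_prop)
  have hμS := key univ MeasurableSet.univ
  rw [preimage_univ, inter_univ, measure_univ, mul_one] at hμS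
  rw [key F hF, hμS]

lemma measurePreserving_doubling : MeasurePreserving doubling μ μ := by
  refine ⟨measurable_doubling, Measure.ext fun F hF => ?_⟩
  rw [Measure.map_apply measurable_doubling hF]
  simpa using measure_inter_preimage_doubling_iterate (n := 1) (isDyadicUnion_univ 1) hF

lemma measure_survivors_le {s : ℕ} {J : Set ℝ} (hJ : IsDyadicUnion s J) (hJm : MeasurableSet J)
    (i : ℕ) : μ (survivors doubling J i)
      ≤ μ (survivors doubling J (i + 1)) + μ (survivors doubling J (i - s)) * μ J := by
  have hsub : survivors doubling J i ⊆
      survivors doubling J (i + 1) ∪ (survivors doubling J (i - s) ∩ doubling^[i] ⁻¹' J) := by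
    intro x hx
    by_cases hxi : doubling^[i] x ∈ J
    · exact Or.inr ⟨survivors_antitone J (Nat.sub_le i s) hx, hxi⟩
    · exact Or.inl fun j hj => (Nat.lt_succ_iff_lt_or_eq.1 hj).elim (hx j) (· ▸ hxi)
  calc _ ≤ _ := measure_mono hsub
    _ ≤ _ := measure_union_le _ _
    _ = _ := by rw [measure_inter_preimage_doubling_iterate (hJ.survivors_sub i) hJm]

lemma exp_le_measure_survivors {s : ℕ} {J : Set ℝ} (hJ : IsDyadicUnion s J)
    (hJm : MeasurableSet J) (hs : 6 ≤ s) (hJμ : μ J ≤ ENNReal.ofReal (2 / 2 ^ s)) (m : ℕ) :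
    ENNReal.ofReal (Real.exp (-(8 * m / 2 ^ s))) ≤ μ (survivors doubling J m) := by
  set q : ℝ := 4 / 2 ^ s
  have hq0 : 0 ≤ q := by positivity
  have hq : q ≤ 1 / 2 :=
    calc q ≤ 4 / 2 ^ 6 :=
          div_le_div_of_nonneg_left (by norm_num) (by norm_num) (pow_le_pow_right₀ one_le_two hs)
      _ ≤ 1 / 2 := by norm_num
  have hp : (μ J).toReal ≤ q * (1 - q) ^ s :=
    calc (μ J).toReal ≤ 2 / 2 ^ s := ENNReal.toReal_le_of_le_ofReal (by positivity) hJμ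
      _ = q * (1 / 2) := by ring
      _ ≤ q * (1 - q) ^ s := mul_le_mul_of_nonneg_left (half_le_one_sub_four_div_pow hs) hq0
  have hrec : ∀ i, (μ (survivors doubling J i)).toReal ≤ (μ (survivors doubling J (i + 1))).toReal
      + (μ J).toReal * (μ (survivors doubling J (i - s))).toReal := by
    intro i
    rw [mul_comm, ← ENNReal.toReal_mul, ← ENNReal.toReal_add (by finiteness) (by finiteness)]
    exact ENNReal.toReal_mono (by finiteness) (measure_survivors_le hJ hJm i)
  have hbound := one_sub_pow_mul_le hq0 (by linarith) hp (fun _ => ENNReal.toReal_nonneg) hrec m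
  rw [survivors_zero, measure_univ, ENNReal.toReal_one, mul_one] at hbound
  calc ENNReal.ofReal (Real.exp (-(8 * m / 2 ^ s))) = ENNReal.ofReal (Real.exp (-(2 * q)) ^ m) := by
        rw [← Real.exp_nat_mul]; congr 2; ring
    _ ≤ ENNReal.ofReal ((μ (survivors doubling J m)).toReal) := ENNReal.ofReal_le_ofReal
        ((pow_le_pow_left₀ (Real.exp_nonneg _) (exp_neg_two_mul_le_one_sub hq0 hq) m).trans hbound)
    _ = μ (survivors doubling J m) := ENNReal.ofReal_toReal (measure_ne_top μ _)

lemma ball_inter_Ico_subset_Ico {y r w : ℝ} (hw : 0 ≤ w)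
    (h : μ (Metric.ball y r ∩ Ico 0 1) ≤ ENNReal.ofReal w) :
    Metric.ball y r ∩ Ico 0 1 ⊆ Ico (max 0 (y - r)) (max 0 (y - r) + w) := by
  set L := max 0 (y - r)
  set U := min 1 (y + r)
  have hIoo : Ioo L U ⊆ Metric.ball y r ∩ Ico 0 1 := by
    rintro z ⟨hLz, hzU⟩
    rw [max_lt_iff] at hLz
    rw [lt_min_iff] at hzU
    refine ⟨?_, hLz.1.le, hzU.1⟩
    rw [Metric.mem_ball, Real.dist_eq, abs_sub_lt_iff]
    constructor <;> linarith
  have hUL : U - L ≤ w := by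
    refine (ENNReal.ofReal_le_ofReal_iff hw).1 ?_
    calc ENNReal.ofReal (U - L) = μ (Ioo L U) := by
          rw [Measure.restrict_eq_self _ (hIoo.trans inter_subset_right), Real.volume_Ioo]
      _ ≤ ENNReal.ofReal w := (measure_mono hIoo).trans h
  rintro x ⟨hxb, hx0, hx1⟩
  rw [Metric.mem_ball, Real.dist_eq, abs_sub_lt_iff] at hxb
  have hxU : x < U := lt_min hx1 (by linarith)
  exact ⟨max_le hx0 (by linarith), by linarith⟩

lemma Ico_subset_dyadicInterval_union (L : ℝ) (s : ℕ) :
    Ico L (L + 1 / 2 ^ s) ⊆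
      dyadicInterval s ⌊2 ^ s * L⌋ ∪ dyadicInterval s (⌊2 ^ s * L⌋ + 1) := by
  rintro x ⟨hLx, hxL⟩
  have hlo : ⌊(2 : ℝ) ^ s * L⌋ ≤ ⌊(2 : ℝ) ^ s * x⌋ := Int.floor_mono (by gcongr)
  have hhi : ⌊(2 : ℝ) ^ s * x⌋ ≤ ⌊(2 : ℝ) ^ s * L⌋ + 1 := by
    rw [← Int.floor_add_one]
    refine Int.floor_mono ?_
    have := mul_lt_mul_of_pos_left hxL (by positivity : (0 : ℝ) < 2 ^ s)
    rw [mul_add, mul_one_div_cancel (by positivity)] at this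
    exact this.le
  simp only [mem_union, mem_dyadicInterval_iff]
  omega

lemma measure_dyadicInterval_union_le (s : ℕ) (k : ℤ) :
    μ (dyadicInterval s k ∪ dyadicInterval s (k + 1)) ≤ ENNReal.ofReal (2 / 2 ^ s) :=
  calc μ (dyadicInterval s k ∪ dyadicInterval s (k + 1))
      ≤ volume (dyadicInterval s k) + volume (dyadicInterval s (k + 1)) :=
        (Measure.restrict_le_self _).trans (measure_union_le _ _)
    _ = ENNReal.ofReal (2 / 2 ^ s) := by
      rw [volume_dyadicInterval, volume_dyadicInterval,
        ← ENNReal.ofReal_add (by positivity) (by positivity)]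
      ring_nf

lemma exists_le_measure_survivors_inter {y r c : ℝ} {m : ℕ} (hc : 0 < c) (hm : 64 * c ≤ m)
    (hBm : μ (Metric.ball y r ∩ Ico 0 1) ≤ ENNReal.ofReal (c / m)) {E : Set ℝ}
    (hE : MeasurableSet E) : ∃ n, ENNReal.ofReal (Real.exp (-(16 * c))) * μ E ≤
      μ (survivors doubling (Metric.ball y r ∩ Ico 0 1) m ∩ doubling^[n] ⁻¹' E) := by
  obtain ⟨s, hs, hcs, hms⟩ := exists_two_pow_near hc hm
  set k := ⌊(2 : ℝ) ^ s * max 0 (y - r)⌋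
  set J := dyadicInterval s k ∪ dyadicInterval s (k + 1)
  have hJ : IsDyadicUnion s J := isDyadicUnion_dyadicInterval_union s k
  have hBJ : Metric.ball y r ∩ Ico 0 1 ⊆ J :=
    (ball_inter_Ico_subset_Ico (by positivity) (hBm.trans (ENNReal.ofReal_le_ofReal hcs))).trans
      (Ico_subset_dyadicInterval_union _ s)
  refine ⟨m + s, ?_⟩
  calc ENNReal.ofReal (Real.exp (-(16 * c))) * μ E ≤ μ (survivors doubling J m) * μ E := by
        gcongr
        exact (ENNReal.ofReal_le_ofReal (Real.exp_le_exp.2 (by linarith))).trans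
          (exp_le_measure_survivors hJ (measurableSet_Ico.union measurableSet_Ico) hs
            (measure_dyadicInterval_union_le s k) m)
    _ = μ (survivors doubling J m ∩ doubling^[m + s] ⁻¹' E) :=
        (measure_inter_preimage_doubling_iterate (by simpa using hJ.survivors_sub (m + s)) hE).symm
    _ ≤ _ := measure_mono (inter_subset_inter_left _ (survivors_mono hBJ m))

end Doubling

end EventuallyAlwaysHitting

open EventuallyAlwaysHitting in
theorem doubling_eah_measure_zero_general
    (y : ℝ) (r : ℕ → ℝ) (hmono : Antitone r)
    (B : ℕ → Set ℝ) (hB : ∀ m, B m = Metric.ball y (r m) ∩ Set.Ico (0 : ℝ) 1)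
    (c : ℝ)
    (hc : ∀ m : ℕ, 1 ≤ m →
      (volume.restrict (Set.Ico (0 : ℝ) 1)) (B m) ≤ ENNReal.ofReal (c / m)) :
    (volume.restrict (Set.Ico (0 : ℝ) 1)) (eahSet doubling B) = 0 := by
  have hBm : ∀ m, MeasurableSet (B m) := fun m => hB m ▸ measurableSet_ball.inter measurableSet_Ico
  have hanti : Antitone B := fun a b hab => by
    rw [hB, hB]; exact inter_subset_inter_left _ (Metric.ball_subset_ball (hmono hab))
  refine measure_eahSet_eq_zero measurePreserving_doubling hanti hBm
    (measure_iInter_eq_zero_of_le_div hc)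
    (ENNReal.ofReal_pos.2 (Real.exp_pos (-(16 * max c 1)))).ne' fun m₀ => ?_
  obtain ⟨m, hm₀, hm⟩ : ∃ m ≥ m₀, 64 * max c 1 ≤ m := ⟨max m₀ ⌈64 * max c 1⌉₊, le_max_left _ _,
    (Nat.le_ceil _).trans (by exact_mod_cast le_max_right _ _)⟩
  have hm1 : 1 ≤ m := by exact_mod_cast (by linarith [le_max_right c 1] : (1 : ℝ) ≤ m)
  have hcm : volume.restrict (Ico (0 : ℝ) 1) (Metric.ball y (r m) ∩ Ico 0 1) ≤
      ENNReal.ofReal (max c 1 / m) :=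
    hB m ▸ (hc m hm1).trans (ENNReal.ofReal_le_ofReal (by gcongr; exact le_max_left c 1))
  obtain ⟨n, hn⟩ := exists_le_measure_survivors_inter (by positivity) hm hcm
    (measurableSet_eahSet measurable_doubling hBm)
  exact ⟨m, hm₀, n, hB m ▸ hn⟩

/-- For the doubling map with Lebesgue measure on `[0,1)`, if `B m` is a nested
sequence of intervals with a fixed center whose lengths tend to `0` and
`μ (B m) ≤ c / m` for all `m ≥ 1`, then the set of eventually always hitting
points has measure zero. -/
theorem doubling_eah_measure_zero
    (y : ℝ) (r : ℕ → ℝ) (hr0 : ∀ m, 0 ≤ r m) (hmono : Antitone r)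
    (hrlim : Tendsto r atTop (nhds 0))
    (B : ℕ → Set ℝ) (hB : ∀ m, B m = Metric.ball y (r m) ∩ Set.Ico (0 : ℝ) 1)
    (c : ℝ)
    (hc : ∀ m : ℕ, 1 ≤ m →
      (volume.restrict (Set.Ico (0 : ℝ) 1)) (B m) ≤ ENNReal.ofReal (c / m)) :
    (volume.restrict (Set.Ico (0 : ℝ) 1)) (eahSet doubling B) = 0 :=
  doubling_eah_measure_zero_general y r hmono B hB c hc
end

section
/- Let T be the doubling map on [0,1) and let s ≥ 1. For the targets B_m = [0, 2^{-sm}), the set E_ah of eventually always hitting points is countable; in particular its packing dimension is 0. Moreover, for s = 1, E_ah consists exactly of the points x ∈ [0,1) such that T^n(x) = 0 for some n ≥ 0. -/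
open MeasureTheory Filter Set
open scoped ENNReal

/-- The packing pre-measure at scale `δ`: supremum over `δ`-packings of `F`
(countable collections of disjoint closed balls centred in `F` of radii at most `δ`,
where a slot with radius `0` is an unused slot) of the sum of the `s`-th powers
of the diameters. -/
noncomputable def packingPre (s δ : ℝ) (F : Set ℝ) : ℝ≥0∞ :=
  ⨆ (c : ℕ → ℝ) (ρ : ℕ → ℝ) (_ : ∀ i, 0 ≤ ρ i ∧ ρ i ≤ δ)
    (_ : ∀ i, 0 < ρ i → c i ∈ F)
    (_ : ∀ i j, i ≠ j → 0 < ρ i → 0 < ρ j →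
      Disjoint (Metric.closedBall (c i) (ρ i)) (Metric.closedBall (c j) (ρ j))),
    ∑' i, ENNReal.ofReal ((2 * ρ i) ^ s)

/-- The packing pre-measure `𝒫₀^s(F) = lim_{δ → 0} 𝒫^s_δ(F)`. -/
noncomputable def packingPre0 (s : ℝ) (F : Set ℝ) : ℝ≥0∞ :=
  ⨅ (δ : ℝ) (_ : 0 < δ), packingPre s δ F

/-- The `s`-dimensional packing measure, obtained from the pre-measure by taking the
infimum over countable covers. -/
noncomputable def packingMeasure (s : ℝ) (F : Set ℝ) : ℝ≥0∞ :=
  ⨅ (E : ℕ → Set ℝ) (_ : F ⊆ ⋃ i, E i), ∑' i, packingPre0 s (E i)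

/-- The packing dimension `dim_P F = sup { s ≥ 0 : 𝒫^s(F) = ∞ }`. -/
noncomputable def dimP (F : Set ℝ) : ℝ :=
  sSup {s : ℝ | 0 ≤ s ∧ packingMeasure s F = ∞}


/-!
Write `y_k` for the `k`-th iterate of `x` under the doubling map. Since `s ≥ 1`, a point of
`E_ah` has, for every large `m`, some `y_k < 2^{-m}` with `k < m`; doubling `y_k` another
`m - 1 - k` times never wraps around, so `y_{m-1} < 1/2` for all large `m`. From then on the orbit
is `y, 2y, 4y, …` and stays below `1/2`, which forces `y = 0`. So `x` is a dyadic rational, and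
there are only countably many of those. Countable sets have packing measure `0` in every positive
dimension, hence packing dimension `0`.
-/

open Topology

lemma mem_eahSet_of_iterate_eq {X : Type*} {T : X → X} {B : ℕ → Set X} {a x : X} {n : ℕ}
    (hB : ∀ m, a ∈ B m) (hx : T^[n] x = a) : x ∈ eahSet T B :=
  ⟨n + 1, fun _ hm => ⟨n, by omega, hx ▸ hB _⟩⟩

lemma doubling_fract (x : ℝ) : doubling (Int.fract x) = Int.fract (2 * x) := by
  have h : 2 * Int.fract x = 2 * x - ((2 * ⌊x⌋ : ℤ) : ℝ) := by
    rw [Int.fract]; push_cast; ring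
  rw [doubling, h, Int.fract_sub_intCast]

lemma doubling_iterate_fract (n : ℕ) (x : ℝ) :
    doubling^[n] (Int.fract x) = Int.fract (2 ^ n * x) := by
  induction n generalizing x with
  | zero => simp
  | succ n ih => rw [Function.iterate_succ_apply, doubling_fract, ih, pow_succ, mul_assoc]

lemma doubling_iterate_of_mem_Ico {x : ℝ} (hx : x ∈ Ico 0 1) (n : ℕ) :
    doubling^[n] x = Int.fract (2 ^ n * x) := by
  rw [← doubling_iterate_fract, Int.fract_eq_self.2 hx]

lemma doubling_iterate_eq_pow_mul {y : ℝ} {n : ℕ} (hy : 0 ≤ y) (h : 2 ^ n * y < 1) :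
    doubling^[n] y = 2 ^ n * y := by
  have hy1 : y < 1 := lt_of_le_of_lt (le_mul_of_one_le_left hy (one_le_pow₀ one_le_two)) h
  rw [doubling_iterate_of_mem_Ico ⟨hy, hy1⟩, Int.fract_eq_self.2 ⟨by positivity, h⟩]

lemma doubling_iterate_lt_half {y : ℝ} {j : ℕ} (hy : 0 ≤ y) (h : y < (2 ^ (j + 1))⁻¹) :
    doubling^[j] y < 1 / 2 := by
  have hj : 2 ^ j * y < 1 / 2 := by
    calc 2 ^ j * y < 2 ^ j * (2 ^ (j + 1))⁻¹ := by gcongr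
      _ = 1 / 2 := by rw [pow_succ]; field_simp
  rwa [doubling_iterate_eq_pow_mul hy (by linarith)]

lemma eq_zero_of_forall_doubling_iterate_lt_half {y : ℝ} (hy : 0 ≤ y)
    (h : ∀ j, doubling^[j] y < 1 / 2) : y = 0 := by
  have hpow : ∀ j : ℕ, 2 ^ j * y < 1 / 2 := by
    intro j
    induction j with
    | zero => simpa using h 0
    | succ j ih =>
      rw [← doubling_iterate_eq_pow_mul hy (by rw [pow_succ]; linarith)]
      exact h (j + 1)
  refine le_antisymm (not_lt.1 fun hpos => ?_) hy
  obtain ⟨j, hj⟩ := pow_unbounded_of_one_lt (1 / 2 / y) one_lt_two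
  exact (hpow j).not_ge ((div_le_iff₀ hpos).1 hj.le)

lemma exists_doubling_iterate_eq_zero_of_mem_eahSet {B : ℕ → Set ℝ}
    (hB : ∀ m, B m ⊆ Ico 0 (2 ^ m)⁻¹) {x : ℝ} (hx : x ∈ Ico 0 1)
    (hxB : x ∈ eahSet doubling B) : ∃ n, doubling^[n] x = 0 := by
  obtain ⟨m₀, hm₀⟩ := hxB
  have hhalf : ∀ p, m₀ ≤ p → doubling^[p] x < 1 / 2 := by
    intro p hp
    obtain ⟨k, hk, hkB⟩ := hm₀ (p + 1) (by omega)
    obtain ⟨hk0, hklt⟩ := hB _ hkB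
    have hsmall : doubling^[k] x < (2 ^ (p - k + 1))⁻¹ :=
      hklt.trans_le (inv_anti₀ (by positivity) (pow_le_pow_right₀ one_le_two (by omega)))
    have := doubling_iterate_lt_half hk0 hsmall
    rwa [← Function.iterate_add_apply, Nat.sub_add_cancel (by omega)] at this
  refine ⟨m₀, eq_zero_of_forall_doubling_iterate_lt_half ?_ fun j => ?_⟩
  · rw [doubling_iterate_of_mem_Ico hx]
    exact Int.fract_nonneg _
  · rw [← Function.iterate_add_apply]
    exact hhalf _ (by omega)

lemma eahSet_doubling_inter_Ico_eq {B : ℕ → Set ℝ} (hB₀ : ∀ m, (0 : ℝ) ∈ B m)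
    (hB : ∀ m, B m ⊆ Ico 0 (2 ^ m)⁻¹) :
    eahSet doubling B ∩ Ico (0 : ℝ) 1
      = {x : ℝ | x ∈ Ico (0 : ℝ) 1 ∧ ∃ n : ℕ, doubling^[n] x = 0} := by
  ext x
  constructor
  · rintro ⟨hxB, hx⟩
    exact ⟨hx, exists_doubling_iterate_eq_zero_of_mem_eahSet hB hx hxB⟩
  · rintro ⟨hx, n, hn⟩
    exact ⟨mem_eahSet_of_iterate_eq hB₀ hn, hx⟩

lemma countable_setOf_doubling_iterate_eq_zero :
    {x : ℝ | x ∈ Ico (0 : ℝ) 1 ∧ ∃ n : ℕ, doubling^[n] x = 0}.Countable := by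
  refine (countable_iUnion fun n : ℕ => countable_range fun z : ℤ => (z : ℝ) / 2 ^ n).mono ?_
  rintro x ⟨hx, n, hn⟩
  rw [doubling_iterate_of_mem_Ico hx, Int.fract, sub_eq_zero] at hn
  refine mem_iUnion.2 ⟨n, ⌊(2 : ℝ) ^ n * x⌋, ?_⟩
  change (⌊(2 : ℝ) ^ n * x⌋ : ℝ) / 2 ^ n = x
  rw [← hn]
  field_simp

/-- Disjoint balls centred at the same point: at most one of them has positive radius. -/
lemma packingPre_singleton_le {s : ℝ} (hs : 0 < s) (δ x : ℝ) :
    packingPre s δ {x} ≤ ENNReal.ofReal ((2 * δ) ^ s) := by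
  refine iSup_le fun c => iSup_le fun ρ => iSup_le fun hρ => iSup_le fun hc =>
    iSup_le fun hdisj => ?_
  have hterm : ∀ i, ENNReal.ofReal ((2 * ρ i) ^ s) ≤ ENNReal.ofReal ((2 * δ) ^ s) := fun i =>
    ENNReal.ofReal_le_ofReal
      (Real.rpow_le_rpow (by linarith [(hρ i).1]) (by linarith [(hρ i).2]) hs.le)
  by_cases hpos : ∃ i, 0 < ρ i
  · obtain ⟨i₀, hi₀⟩ := hpos
    have hzero : ∀ i, i ≠ i₀ → ENNReal.ofReal ((2 * ρ i) ^ s) = 0 := by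
      intro i hi
      have hρi : ρ i = 0 := by
        refine le_antisymm (not_lt.1 fun hi' => ?_) (hρ i).1
        have hballs := hdisj i i₀ hi hi' hi₀
        rw [mem_singleton_iff.1 (hc i hi'), mem_singleton_iff.1 (hc i₀ hi₀)] at hballs
        exact disjoint_left.1 hballs (Metric.mem_closedBall_self hi'.le)
          (Metric.mem_closedBall_self hi₀.le)
      simp [hρi, Real.zero_rpow hs.ne']
    rw [tsum_eq_single i₀ hzero]
    exact hterm i₀
  · push Not at hpos
    have hzero : ∀ i, ENNReal.ofReal ((2 * ρ i) ^ s) = 0 := fun i => by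
      simp [le_antisymm (hpos i) (hρ i).1, Real.zero_rpow hs.ne']
    simp [hzero]

lemma packingPre0_singleton {s : ℝ} (hs : 0 < s) (x : ℝ) : packingPre0 s {x} = 0 := by
  have hcont : Tendsto (fun δ : ℝ => ENNReal.ofReal ((2 * δ) ^ s)) (𝓝[>] 0) (𝓝 0) := by
    have : ContinuousAt (fun δ : ℝ => ENNReal.ofReal ((2 * δ) ^ s)) 0 :=
      ENNReal.continuous_ofReal.continuousAt.comp
        ((Real.continuousAt_rpow_const _ _ (Or.inr hs.le)).comp (by fun_prop))
    simpa [Real.zero_rpow hs.ne'] using this.tendsto.mono_left nhdsWithin_le_nhds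
  refine nonpos_iff_eq_zero.1 (ge_of_tendsto hcont ?_)
  filter_upwards [self_mem_nhdsWithin] with δ hδ
  exact (iInf₂_le δ hδ).trans (packingPre_singleton_le hs δ x)

/-- Because `0 ^ 0 = 1`, every unused slot of a packing contributes `1` in dimension `0`. -/
lemma packingPre0_zero (F : Set ℝ) : packingPre0 0 F = ∞ := by
  refine top_le_iff.1 (le_iInf₂ fun δ hδ => ?_)
  refine le_iSup_of_le 0 (le_iSup_of_le 0 (le_iSup_of_le (fun _ => ⟨le_rfl, hδ.le⟩) ?_))
  refine le_iSup_of_le (fun _ h => absurd h (lt_irrefl 0)) ?_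
  refine le_iSup_of_le (fun _ _ _ h => absurd h (lt_irrefl 0)) ?_
  simp

lemma packingMeasure_zero (F : Set ℝ) : packingMeasure 0 F = ∞ :=
  top_le_iff.1 (le_iInf₂ fun E _ => (packingPre0_zero (E 0)).symm.le.trans (ENNReal.le_tsum 0))

lemma packingMeasure_eq_zero_of_countable {s : ℝ} (hs : 0 < s) {F : Set ℝ} (hF : F.Countable) :
    packingMeasure s F = 0 := by
  obtain ⟨f, hf⟩ := countable_iff_exists_subset_range.1 hF
  have hcover : F ⊆ ⋃ i, {f i} := fun y hy => by
    obtain ⟨i, rfl⟩ := hf hy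
    exact mem_iUnion.2 ⟨i, rfl⟩
  refine nonpos_iff_eq_zero.1 ((iInf₂_le (fun i => {f i}) hcover).trans ?_)
  simp [packingPre0_singleton hs]

lemma dimP_eq_zero_of_countable {F : Set ℝ} (hF : F.Countable) : dimP F = 0 := by
  have hset : {s : ℝ | 0 ≤ s ∧ packingMeasure s F = ∞} = {0} := by
    ext s
    refine ⟨fun ⟨hs, htop⟩ => ?_, fun hs => ⟨hs.ge, hs ▸ packingMeasure_zero F⟩⟩
    by_contra hne
    rw [packingMeasure_eq_zero_of_countable (lt_of_le_of_ne hs (Ne.symm hne)) hF] at htop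
    exact ENNReal.zero_ne_top htop
  rw [dimP, hset, csSup_singleton]

/-- For the doubling map with targets `B m = [0, 2^{-sm})`, `s ≥ 1`, the set of
eventually always hitting points is countable, its packing dimension is `0`, and for
`s = 1` it consists exactly of the points of `[0,1)` whose orbit eventually hits `0`. -/
theorem doubling_eah_countable (s : ℝ) (hs : 1 ≤ s)
    (B : ℕ → Set ℝ)
    (hB : ∀ m : ℕ, B m = Set.Ico (0 : ℝ) ((2 : ℝ) ^ (-(s * (m : ℝ))))) :
    (eahSet doubling B ∩ Set.Ico (0 : ℝ) 1).Countable ∧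
    dimP (eahSet doubling B ∩ Set.Ico (0 : ℝ) 1) = 0 ∧
    (s = 1 → eahSet doubling B ∩ Set.Ico (0 : ℝ) 1
      = {x : ℝ | x ∈ Set.Ico (0 : ℝ) 1 ∧ ∃ n : ℕ, doubling^[n] x = 0}) := by
  have hB₀ : ∀ m, (0 : ℝ) ∈ B m := fun m => hB m ▸ ⟨le_rfl, by positivity⟩
  have hB_sub : ∀ m, B m ⊆ Ico 0 (2 ^ m)⁻¹ := by
    intro m
    rw [hB, ← Real.rpow_natCast, ← Real.rpow_neg zero_le_two]
    refine Ico_subset_Ico_right (Real.rpow_le_rpow_of_exponent_le one_le_two ?_)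
    nlinarith [(Nat.cast_nonneg m : (0 : ℝ) ≤ m)]
  have hchar := eahSet_doubling_inter_Ico_eq hB₀ hB_sub
  have hcount : (eahSet doubling B ∩ Ico (0 : ℝ) 1).Countable :=
    hchar ▸ countable_setOf_doubling_iterate_eq_zero
  exact ⟨hcount, dimP_eq_zero_of_countable hcount, fun _ => hchar⟩
end

section
/- Let (X, μ, T) be a measure-preserving dynamical system (μ finite or infinite) and let (B_m)_{m≥1} be a nested family of measurable targets with μ(B_m) → 0. Then the set E_ah of eventually always hitting points satisfies μ(E_ah △ T^{-1}(E_ah)) = 0, i.e. E_ah is almost invariant under T. -/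
open MeasureTheory Filter Set
open scoped symmDiff

def eahSetFrom {X : Type*} (T : X → X) (B : ℕ → Set X) (q : ℕ) : Set X :=
  {x | ∀ m : ℕ, q ≤ m → ∃ k : ℕ, k < m ∧ T^[k] x ∈ B m}

theorem eahSet_eq_iUnion_eahSetFrom {X : Type*} (T : X → X) (B : ℕ → Set X) :
    eahSet T B = ⋃ q, eahSetFrom T B q := by
  ext x
  simp only [mem_iUnion]
  rfl

section

variable {X : Type*} {T : X → X} {B : ℕ → Set X}

theorem eahSetFrom_mono : Monotone (eahSetFrom T B) :=
  fun _ _ hqr _ hx m hm => hx m (hqr.trans hm)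

theorem eahSetFrom_eq_biInter (q : ℕ) :
    eahSetFrom T B q = ⋂ m ≥ q, ⋃ k < m, T^[k] ⁻¹' B m := by
  ext x
  simp [eahSetFrom]

theorem measurableSet_eahSetFrom [MeasurableSpace X] (hT : Measurable T)
    (hB : ∀ m, MeasurableSet (B m)) (q : ℕ) : MeasurableSet (eahSetFrom T B q) := by
  rw [eahSetFrom_eq_biInter]
  exact .biInter (to_countable _) fun m _ =>
    .biUnion (to_countable _) fun k _ => (hB m).preimage (hT.iterate k)

theorem measure_eahSetFrom_le [MeasurableSpace X] {μ : Measure X}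
    (hT : MeasurePreserving T μ μ) (hB : ∀ m, MeasurableSet (B m)) {q m : ℕ} (hqm : q ≤ m) :
    μ (eahSetFrom T B q) ≤ m * μ (B m) :=
  calc μ (eahSetFrom T B q) ≤ μ (⋃ k ∈ Finset.range m, T^[k] ⁻¹' B m) :=
        measure_mono fun x hx => by
          obtain ⟨k, hk, hkx⟩ := hx m hqm
          exact mem_biUnion (Finset.mem_range.mpr hk) hkx
    _ ≤ ∑ k ∈ Finset.range m, μ (T^[k] ⁻¹' B m) := measure_biUnion_finset_le _ _
    _ = m * μ (B m) := by
        simp [(hT.iterate _).measure_preimage (hB m).nullMeasurableSet]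

theorem eahSetFrom_sdiff_preimage_subset (hB : Antitone B) (q : ℕ) :
    eahSetFrom T B q \ T ⁻¹' eahSetFrom T B q ⊆ B (q + 1) := by
  rintro x ⟨hx, hTx⟩
  by_contra hxB
  refine hTx fun m hm => ?_
  obtain ⟨_ | k, hk, hkx⟩ := hx (m + 1) (by omega)
  · exact absurd (hB (by omega) hkx) hxB
  · exact ⟨k, by omega, hB m.le_succ (by rwa [Function.iterate_succ_apply] at hkx)⟩

end

theorem measure_iUnion_sdiff_iUnion_eq_zero {X : Type*} [MeasurableSpace X] {μ : Measure X}
    {F G : ℕ → Set X} (hG : Monotone G)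
    (h : Tendsto (fun q => μ (G q \ F q)) atTop (nhds 0)) :
    μ ((⋃ q, G q) \ ⋃ q, F q) = 0 := by
  rw [iUnion_sdiff]
  refine measure_iUnion_null fun q => le_antisymm (ge_of_tendsto h ?_) zero_le
  filter_upwards [eventually_ge_atTop q] with r hqr
  exact measure_mono (sdiff_subset_sdiff (hG hqr) (subset_iUnion F r))

/-- For a measure-preserving system (`μ` finite or infinite) and a nested family of
measurable targets with `μ (B m) → 0`, the set of eventually always hitting points
is almost invariant: `μ (E_ah ∆ T⁻¹ E_ah) = 0`. -/
theorem eah_almost_invariant {X : Type*} [MeasurableSpace X]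
    (μ : Measure X) (T : X → X) (hT : MeasurePreserving T μ μ)
    (B : ℕ → Set X) (hmeas : ∀ m, MeasurableSet (B m))
    (hnested : ∀ m, B (m + 1) ⊆ B m)
    (hlim : Tendsto (fun m => μ (B m)) atTop (nhds 0)) :
    μ ((eahSet T B) ∆ (T ⁻¹' (eahSet T B))) = 0 := by
  set F := eahSetFrom T B
  have hF : ∀ q, MeasurableSet (F q) := measurableSet_eahSetFrom hT.measurable hmeas
  have hF_fin : ∀ q, μ (F q) ≠ ⊤ := fun q => by
    obtain ⟨m, hm, hqm⟩ := ((hlim.eventually (gt_mem_nhds one_pos)).and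
      (eventually_ge_atTop q)).exists
    exact ne_top_of_le_ne_top (by finiteness) (measure_eahSetFrom_le hT hmeas hqm)
  have h_out : Tendsto (fun q => μ (F q \ T ⁻¹' F q)) atTop (nhds 0) :=
    tendsto_of_tendsto_of_tendsto_of_le_of_le tendsto_const_nhds
      (hlim.comp (tendsto_add_atTop_nat 1)) (fun _ => zero_le) fun q =>
        measure_mono (eahSetFrom_sdiff_preimage_subset (antitone_nat_of_succ_le hnested) q)
  -- `μ (F q) < ∞` and `T` preserves `μ`: the mass leaving `F q` equals the mass entering it.
  have h_in : Tendsto (fun q => μ (T ⁻¹' F q \ F q)) atTop (nhds 0) :=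
    h_out.congr fun q => measure_sdiff_symm (hF q).nullMeasurableSet
      ((hF q).preimage hT.measurable).nullMeasurableSet
      (hT.measure_preimage (hF q).nullMeasurableSet).symm
      (ne_top_of_le_ne_top (hF_fin q) (measure_mono inter_subset_left))
  rw [symmDiff_def, eahSet_eq_iUnion_eahSetFrom, preimage_iUnion]
  exact measure_union_null (measure_iUnion_sdiff_iUnion_eq_zero eahSetFrom_mono h_out)
    (measure_iUnion_sdiff_iUnion_eq_zero (fun _ _ h => preimage_mono (eahSetFrom_mono h)) h_in)
end

section
/- Let (X, μ, T) be an ergodic measure-preserving dynamical system with μ a probability measure, and let (B_m)_{m≥1} be a nested family of measurable targets with μ(B_m) → 0. Then μ(E_ah) = 0 or μ(E_ah) = 1. -/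
open MeasureTheory Filter Set

/-!
Since the targets are nested, a point `x` of `E_ah` lying outside `⋂ m, B m` never hits a late
target at time `0`, so the hits of its orbit at times `1, …, m` of `B (m + 1) ⊆ B m` are hits
of the orbit of `T x` at times `0, …, m - 1`; thus `T x ∈ E_ah`. As `μ (B m) → 0`, the
intersection `⋂ m, B m` is null, so `E_ah ⊆ T⁻¹' E_ah` almost everywhere, and ergodicity forces
`E_ah` to be null or conull.
-/

theorem measurableSet_eahSet {X : Type*} [MeasurableSpace X] {T : X → X} (hT : Measurable T)
    {B : ℕ → Set X} (hB : ∀ m, MeasurableSet (B m)) : MeasurableSet (eahSet T B) := by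
  simp only [eahSet, ofPred_exists, ofPred_forall, ofPred_and]
  exact .iUnion fun m₀ => .iInter fun m => .iInter fun _ => .iUnion fun k =>
    (MeasurableSet.const _).inter (hT.iterate k (hB m))

theorem apply_mem_eahSet {X : Type*} {T : X → X} {B : ℕ → Set X} (hB : Antitone B) {x : X}
    (hx : x ∈ eahSet T B) (hx' : x ∉ ⋂ m, B m) : T x ∈ eahSet T B := by
  obtain ⟨m₀, hm₀⟩ := hx
  obtain ⟨M, hM⟩ : ∃ M, x ∉ B M := by simpa using hx'
  refine ⟨max m₀ M, fun m hm => ?_⟩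
  obtain ⟨k, hk, hkx⟩ := hm₀ (m + 1) (by omega)
  obtain ⟨j, rfl⟩ : ∃ j, k = j + 1 := by
    refine Nat.exists_eq_add_one.mpr (Nat.pos_of_ne_zero ?_)
    rintro rfl
    exact hM (hB (by omega) hkx)
  exact ⟨j, by omega, hB m.le_succ (by rwa [Function.iterate_succ_apply] at hkx)⟩

theorem measure_iInter_eq_zero_of_tendsto {X : Type*} [MeasurableSpace X] {μ : Measure X}
    {B : ℕ → Set X} (hlim : Tendsto (fun m => μ (B m)) atTop (nhds 0)) : μ (⋂ m, B m) = 0 :=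
  nonpos_iff_eq_zero.mp (ge_of_tendsto' hlim fun m => measure_mono (iInter_subset B m))

/-- For an ergodic probability-measure-preserving system and a nested family of
measurable targets with `μ (B m) → 0`, the set of eventually always hitting points
obeys a zero-one law. -/
theorem eah_zero_one_law {X : Type*} [MeasurableSpace X]
    (μ : Measure X) [IsProbabilityMeasure μ] (T : X → X) (hT : Ergodic T μ)
    (B : ℕ → Set X) (hmeas : ∀ m, MeasurableSet (B m))
    (hnested : ∀ m, B (m + 1) ⊆ B m)
    (hlim : Tendsto (fun m => μ (B m)) atTop (nhds 0)) :
    μ (eahSet T B) = 0 ∨ μ (eahSet T B) = 1 := by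
  have hE : MeasurableSet (eahSet T B) := measurableSet_eahSet hT.measurable hmeas
  have hinv : eahSet T B ≤ᵐ[μ] T ⁻¹' eahSet T B := by
    filter_upwards [measure_eq_zero_iff_ae_notMem.mp (measure_iInter_eq_zero_of_tendsto hlim)]
      with x hx hxE
    exact apply_mem_eahSet (antitone_nat_of_succ_le hnested) hxE hx
  rcases hT.ae_empty_or_univ_of_ae_le_preimage hE.nullMeasurableSet hinv with h | h
  · exact .inl (by simpa using measure_congr h)
  · exact .inr (by simpa using measure_congr h)
end

section
/- Let (X, μ, T) be a measure-preserving dynamical system with μ a probability measure, and let (B_m)_{m≥1} be measurable targets with μ(B_m) → 0. If μ(E_ah) = 1, then there exists a sequence c_m → 1 such that μ(B_m) ≥ c_m/m for all m; equivalently, liminf_{m→∞} m·μ(B_m) ≥ 1. -/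
open MeasureTheory Filter Set
open scoped ENNReal Topology

/-!
A point that always hits from time `n` on has, for each `m ≥ n`, one of its first `m` iterates
in `B m`; so this set lies in `⋃_{k<m} T^{-k} B m`, whose measure is at most `m μ(B m)` since
`T` preserves `μ`. The sets increase to the eventually always hitting set, so
`μ(E_ah) ≤ liminf m μ(B m)`, and `c m := min 1 (m μ(B m))` is the required sequence.
-/

def alwaysHitsFrom {X : Type*} (T : X → X) (B : ℕ → Set X) (n : ℕ) : Set X :=
  {x | ∀ m : ℕ, n ≤ m → ∃ k : ℕ, k < m ∧ T^[k] x ∈ B m}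

section Hitting

variable {X : Type*} (T : X → X) (B : ℕ → Set X)

lemma monotone_alwaysHitsFrom : Monotone (alwaysHitsFrom T B) :=
  fun _ _ hab _ hx m hm => hx m (hab.trans hm)

lemma eahSet_eq_iUnion_alwaysHitsFrom : eahSet T B = ⋃ n, alwaysHitsFrom T B n := by
  ext x
  simp [eahSet, alwaysHitsFrom]

lemma alwaysHitsFrom_subset_biUnion_preimage {n m : ℕ} (hnm : n ≤ m) :
    alwaysHitsFrom T B n ⊆ ⋃ k ∈ Finset.range m, T^[k] ⁻¹' B m := fun _ hx => by
  obtain ⟨k, hk, hkB⟩ := hx m hnm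
  exact mem_biUnion (Finset.mem_range.2 hk) hkB

variable {T} [MeasurableSpace X] {μ : Measure X}

lemma MeasureTheory.MeasurePreserving.measure_alwaysHitsFrom_le (hT : MeasurePreserving T μ μ)
    {n m : ℕ} (hnm : n ≤ m) : μ (alwaysHitsFrom T B n) ≤ m * μ (B m) :=
  calc μ (alwaysHitsFrom T B n) ≤ μ (⋃ k ∈ Finset.range m, T^[k] ⁻¹' B m) :=
        measure_mono (alwaysHitsFrom_subset_biUnion_preimage T B hnm)
    _ ≤ ∑ k ∈ Finset.range m, μ (T^[k] ⁻¹' B m) := measure_biUnion_finset_le _ _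
    _ ≤ ∑ _k ∈ Finset.range m, μ (B m) :=
        Finset.sum_le_sum fun k _ => (hT.iterate k).measure_preimage_le _
    _ = m * μ (B m) := by rw [Finset.sum_const, Finset.card_range, nsmul_eq_mul]

lemma MeasureTheory.MeasurePreserving.measure_eahSet_le_liminf (hT : MeasurePreserving T μ μ) :
    μ (eahSet T B) ≤ liminf (fun m : ℕ => (m : ℝ≥0∞) * μ (B m)) atTop := by
  rw [eahSet_eq_iUnion_alwaysHitsFrom, (monotone_alwaysHitsFrom T B).directed_le.measure_iUnion]
  exact iSup_le fun n => le_liminf_of_le (by isBoundedDefault)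
    (eventually_atTop.2 ⟨n, fun m hm => hT.measure_alwaysHitsFrom_le B hm⟩)

end Hitting

lemma ENNReal.tendsto_min_one_of_one_le_liminf {ι : Type*} {l : Filter ι} {b : ι → ℝ≥0∞}
    (h : 1 ≤ liminf b l) : Tendsto (fun i => min 1 (b i)) l (𝓝 1) := by
  refine tendsto_order.2 ⟨fun a ha => ?_, fun a ha => Eventually.of_forall fun i =>
    (min_le_left _ _).trans_lt ha⟩
  filter_upwards [eventually_lt_of_lt_liminf (ha.trans_le h)] with i hi
  exact lt_min ha hi

lemma ENNReal.exists_tendsto_one_ofReal_div_le_of_one_le_liminf {a : ℕ → ℝ≥0∞}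
    (h : 1 ≤ liminf (fun m : ℕ => (m : ℝ≥0∞) * a m) atTop) :
    ∃ c : ℕ → ℝ, Tendsto c atTop (𝓝 1) ∧
      ∀ m : ℕ, 1 ≤ m → ENNReal.ofReal (c m / m) ≤ a m := by
  refine ⟨fun m => (min 1 ((m : ℝ≥0∞) * a m)).toReal, ?_, fun m hm => ?_⟩
  · exact (ENNReal.tendsto_toReal ENNReal.one_ne_top).comp
      (ENNReal.tendsto_min_one_of_one_le_liminf h)
  · have hm₀ : (0 : ℝ) < m := by exact_mod_cast hm
    rw [ENNReal.ofReal_div_of_pos hm₀, ENNReal.ofReal_toReal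
      (ne_top_of_le_ne_top ENNReal.one_ne_top (min_le_left _ _)), ENNReal.ofReal_natCast]
    exact ENNReal.div_le_of_le_mul' (min_le_right _ _)

theorem eah_full_necessary_general {X : Type*} [MeasurableSpace X]
    (μ : Measure X) (T : X → X)
    (hT : MeasurePreserving T μ μ)
    (B : ℕ → Set X)
    (hfull : μ (eahSet T B) = 1) :
    (∃ c : ℕ → ℝ, Tendsto c atTop (nhds 1) ∧
      ∀ m : ℕ, 1 ≤ m → ENNReal.ofReal (c m / m) ≤ μ (B m)) ∧
    1 ≤ Filter.liminf (fun m : ℕ => (m : ℝ≥0∞) * μ (B m)) atTop := by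
  have hliminf : 1 ≤ liminf (fun m : ℕ => (m : ℝ≥0∞) * μ (B m)) atTop :=
    hfull ▸ hT.measure_eahSet_le_liminf B
  exact ⟨ENNReal.exists_tendsto_one_ofReal_div_le_of_one_le_liminf hliminf, hliminf⟩

/-- For a probability-measure-preserving system with targets satisfying
`μ (B m) → 0`, if the set of eventually always hitting points has full measure then
there is a sequence `c m → 1` with `μ (B m) ≥ c m / m` for all `m ≥ 1`; equivalently,
`liminf m·μ (B m) ≥ 1`. -/
theorem eah_full_necessary {X : Type*} [MeasurableSpace X]
    (μ : Measure X) [IsProbabilityMeasure μ] (T : X → X)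
    (hT : MeasurePreserving T μ μ)
    (B : ℕ → Set X) (hmeas : ∀ m, MeasurableSet (B m))
    (hlim : Tendsto (fun m => μ (B m)) atTop (nhds 0))
    (hfull : μ (eahSet T B) = 1) :
    (∃ c : ℕ → ℝ, Tendsto c atTop (nhds 1) ∧
      ∀ m : ℕ, 1 ≤ m → ENNReal.ofReal (c m / m) ≤ μ (B m)) ∧
    1 ≤ Filter.liminf (fun m : ℕ => (m : ℝ≥0∞) * μ (B m)) atTop :=
  eah_full_necessary_general μ T hT B hfull
end

section
/- Let (X, μ, T) be an ergodic measure-preserving dynamical system with μ a probability measure, and let (B_m)_{m≥1} be a nested sequence of measurable targets with μ(B_m) → 0. If there exists c < 1 such that μ(B_m) ≤ c/m holds for infinitely many m, then μ(E_ah) = 0. -/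
open MeasureTheory Filter Set
open scoped ENNReal

def hitSet {X : Type*} (T : X → X) (B : Set X) (m : ℕ) : Set X :=
  ⋃ k ∈ Finset.range m, T^[k] ⁻¹' B

section HitSet

variable {X : Type*} {T : X → X} {B : Set X} {m : ℕ}

lemma mem_hitSet {x : X} : x ∈ hitSet T B m ↔ ∃ k < m, T^[k] x ∈ B := by
  simp [hitSet]

lemma measurableSet_hitSet [MeasurableSpace X] (hT : Measurable T) (hB : MeasurableSet B) :
    MeasurableSet (hitSet T B m) :=
  .biUnion (Finset.range m).countable_toSet fun k _ => hT.iterate k hB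

lemma MeasureTheory.MeasurePreserving.measure_hitSet_le [MeasurableSpace X] {μ : Measure X}
    (hT : MeasurePreserving T μ μ) (hB : NullMeasurableSet B μ) :
    μ (hitSet T B m) ≤ m * μ B :=
  calc μ (hitSet T B m) ≤ ∑ k ∈ Finset.range m, μ (T^[k] ⁻¹' B) := measure_biUnion_finset_le _ _
    _ = m * μ B := by simp [(hT.iterate _).measure_preimage hB]

end HitSet

lemma eahSet_eq_liminf {X : Type*} (T : X → X) (B : ℕ → Set X) :
    eahSet T B = liminf (fun m => hitSet T (B m) m) atTop := by
  ext x
  simp [eahSet, mem_liminf_iff_eventually_mem, mem_hitSet]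

lemma eahSet_diff_iInter_subset_preimage {X : Type*} (T : X → X) {B : ℕ → Set X}
    (hB : Antitone B) : eahSet T B \ ⋂ m, B m ⊆ T ⁻¹' eahSet T B := by
  rintro x ⟨⟨m₀, hm₀⟩, hx⟩
  obtain ⟨m₁, hm₁⟩ : ∃ m₁, x ∉ B m₁ := by simpa using hx
  refine ⟨max m₀ m₁, fun m hm => ?_⟩
  obtain ⟨k, hk, hkB⟩ := hm₀ (m + 1) (by omega)
  cases k with
  | zero => exact absurd (hB (by omega : m₁ ≤ m + 1) hkB) hm₁
  | succ k => exact ⟨k, by omega, hB m.le_succ hkB⟩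

lemma MeasureTheory.measure_liminf_le_liminf_measure {α : Type*} [MeasurableSpace α]
    (μ : Measure α) (s : ℕ → Set α) :
    μ (liminf s atTop) ≤ liminf (fun n => μ (s n)) atTop := by
  have hmono : Monotone fun n => ⋂ i ≥ n, s i :=
    fun a b hab => biInter_mono (fun i (hi : b ≤ i) => hab.trans hi) fun _ _ => subset_rfl
  rw [liminf_eq_iSup_iInf_of_nat, liminf_eq_iSup_iInf_of_nat]
  simp only [iSup_eq_iUnion, iInf_eq_iInter]
  rw [hmono.measure_iUnion]
  exact iSup_mono fun n => le_iInf₂ fun i hi => measure_mono (biInter_subset_of_mem hi)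

lemma Ergodic.measure_eq_zero_of_ae_le_preimage {X : Type*} [MeasurableSpace X] {μ : Measure X}
    [IsFiniteMeasure μ] {T : X → X} {s : Set X} (hT : Ergodic T μ) (hs : NullMeasurableSet s μ)
    (hinv : s ≤ᵐ[μ] T ⁻¹' s) (hlt : μ s < μ univ) : μ s = 0 := by
  rcases hT.ae_empty_or_univ_of_ae_le_preimage hs hinv with h | h
  · simpa using measure_congr h
  · exact absurd (measure_congr h) hlt.ne

lemma ENNReal.natCast_mul_ofReal_div_le (m : ℕ) (c : ℝ) :
    (m : ℝ≥0∞) * ENNReal.ofReal (c / m) ≤ ENNReal.ofReal c := by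
  rcases Nat.eq_zero_or_pos m with rfl | hm
  · simp
  rw [← ENNReal.ofReal_natCast, ← ENNReal.ofReal_mul m.cast_nonneg,
    mul_div_cancel₀ c (by positivity)]

/-- For an ergodic probability-measure-preserving system and a nested sequence of
measurable targets with `μ (B m) → 0`: if there is `c < 1` with `μ (B m) ≤ c / m` for
infinitely many `m`, then the set of eventually always hitting points has measure
zero. -/
theorem eah_zero_sufficient_finite {X : Type*} [MeasurableSpace X]
    (μ : Measure X) [IsProbabilityMeasure μ] (T : X → X) (hT : Ergodic T μ)
    (B : ℕ → Set X) (hmeas : ∀ m, MeasurableSet (B m))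
    (hnested : ∀ m, B (m + 1) ⊆ B m)
    (hlim : Tendsto (fun m => μ (B m)) atTop (nhds 0))
    (hc : ∃ c : ℝ, c < 1 ∧ ∃ᶠ m : ℕ in atTop, μ (B m) ≤ ENNReal.ofReal (c / m)) :
    μ (eahSet T B) = 0 := by
  obtain ⟨c, hc1, hcm⟩ := hc
  have hE_meas : MeasurableSet (eahSet T B) := by
    rw [eahSet_eq_liminf]
    exact MeasurableSet.measurableSet_liminf fun m => measurableSet_hitSet hT.measurable (hmeas m)
  have hE_le : μ (eahSet T B) ≤ ENNReal.ofReal c := by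
    rw [eahSet_eq_liminf]
    refine (measure_liminf_le_liminf_measure μ _).trans (liminf_le_of_frequently_le' ?_)
    refine hcm.mono fun m hm => ?_
    calc μ (hitSet T (B m) m) ≤ m * μ (B m) :=
          hT.toMeasurePreserving.measure_hitSet_le (hmeas m).nullMeasurableSet
      _ ≤ m * ENNReal.ofReal (c / m) := by gcongr
      _ ≤ ENNReal.ofReal c := ENNReal.natCast_mul_ofReal_div_le m c
  have hcore_null : μ (⋂ m, B m) = 0 :=
    le_antisymm (ge_of_tendsto' hlim fun m => measure_mono (iInter_subset _ m)) bot_le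
  have hinv : eahSet T B ≤ᵐ[μ] T ⁻¹' eahSet T B := ae_le_set.mpr <|
    measure_mono_null
      (sdiff_subset_comm.mp (eahSet_diff_iInter_subset_preimage T (antitone_nat_of_succ_le hnested)))
      hcore_null
  refine hT.measure_eq_zero_of_ae_le_preimage hE_meas.nullMeasurableSet hinv ?_
  rw [measure_univ]
  exact hE_le.trans_lt (ENNReal.ofReal_lt_one.mpr hc1)
end

section
/- Let (X, μ, T) be a measure-preserving dynamical system with X ⊆ ℝ an interval and μ a probability measure, and suppose correlations decay as p for L¹ against BV: |∫ f∘Tⁿ · g dμ − ∫ f dμ ∫ g dμ| ≤ ‖f‖₁ ‖g‖_BV p(n) for all n ≥ 1 and all f ∈ L¹(μ), g of bounded variation. Suppose p(n) ≤ C e^{−τn} for some C ≥ 0 and τ > 0. Let (B_m)_{m≥1} be a sequence of balls (intervals) in X with μ(B_m) → 0. If μ(B_m) ≥ c (log m)²/m for some c > 1/τ and all sufficiently large m, then μ(E_ah) = 1. -/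
/-!
Sample the orbit of `x` up to time `m` along the arithmetic progression `0, s, 2s, …` of
`K = ⌊m / s⌋` times, with block length `s = ⌈a log m⌉` for some `1/τ < a < c`. Decay of
correlations, applied to `1_D ∘ T^s` against the BV function `1_{B m}`, shows that missing
`B m` at one more sampled time costs a factor `1 - μ (B m) + 3 p(s)`. Since `p(s) ≤ C / m` and
`K ≤ m`, missing `B m` at all `K` times has probability at most
`e^{3C} exp(-μ (B m) K) ≤ e^{3C} m^{-β}`, where `1 < β < c / a` because
`μ (B m) ≥ c (log m)² / m`. These bounds are summable, and Borel–Cantelli shows that almost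
every orbit misses `B m` within time `m` for only finitely many `m`.
-/

open MeasureTheory Filter Set
open scoped ENNReal

/-- The BV norm of `g` on `X` with respect to `μ`: total variation plus `L¹` norm. -/
noncomputable def bvNorm (X : Set ℝ) (μ : MeasureTheory.Measure ℝ) (g : ℝ → ℝ) : ℝ :=
  (eVariationOn g X).toReal + ∫ x, |g x| ∂μ

open Topology

section Variation

variable {α : Type*} [LinearOrder α]

lemma eVariationOn_sub_le (f g : α → ℝ) (s : Set α) :
    eVariationOn (f - g) s ≤ eVariationOn f s + eVariationOn g s := by
  refine iSup_le fun ⟨n, u, hu, hus⟩ => ?_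
  calc ∑ i ∈ Finset.range n, edist ((f - g) (u (i + 1))) ((f - g) (u i))
      ≤ ∑ i ∈ Finset.range n,
          (edist (f (u (i + 1))) (f (u i)) + edist (g (u (i + 1))) (g (u i))) := by
        gcongr with i
        simp only [Pi.sub_apply, edist_dist, ← ENNReal.ofReal_add dist_nonneg dist_nonneg]
        exact ENNReal.ofReal_le_ofReal (dist_sub_sub_le _ _ _ _)
    _ ≤ eVariationOn f s + eVariationOn g s := by
        rw [Finset.sum_add_distrib]
        exact add_le_add (eVariationOn.sum_le hu hus) (eVariationOn.sum_le hu hus)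

lemma Monotone.eVariationOn_le {f : α → ℝ} (hf : Monotone f) {l u : ℝ}
    (hl : ∀ x, l ≤ f x) (hu : ∀ x, f x ≤ u) (s : Set α) :
    eVariationOn f s ≤ ENNReal.ofReal (u - l) := by
  rw [eVariationOn.eq_biSup_inter_Icc]
  refine iSup₂_le fun p hp => ?_
  rw [(hf.monotoneOn s).eVariationOn_eq hp.1 hp.2.1]
  exact ENNReal.ofReal_le_ofReal (by linarith [hl p.1, hu p.2])

lemma IsUpperSet.eVariationOn_indicator_one_le {E : Set α} (hE : IsUpperSet E) (s : Set α) :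
    eVariationOn (E.indicator (1 : α → ℝ)) s ≤ 1 := by
  have hmono : Monotone (E.indicator (1 : α → ℝ)) := fun x y hxy => by
    by_cases hx : x ∈ E
    · simp [hx, hE hxy hx]
    · rw [indicator_of_notMem hx]
      exact indicator_nonneg (fun _ _ => zero_le_one) y
  simpa using hmono.eVariationOn_le (fun x => indicator_nonneg (fun _ _ => zero_le_one) x)
    (fun x => indicator_le_self' (fun _ _ => zero_le_one) x) s

end Variation

lemma eVariationOn_indicator_Ioo_le (a b : ℝ) (s : Set ℝ) :
    eVariationOn ((Ioo a b).indicator (1 : ℝ → ℝ)) s ≤ 2 := by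
  rcases le_or_gt b a with hba | hab
  · rw [Ioo_eq_empty (not_lt.2 hba)]
    exact isUpperSet_empty.eVariationOn_indicator_one_le s |>.trans one_le_two
  · rw [← Ioi_sdiff_Ici, indicator_sdiff (Ici_subset_Ioi.2 hab)]
    calc _ ≤ _ := eVariationOn_sub_le _ _ s
      _ ≤ 1 + 1 := add_le_add ((isUpperSet_Ioi a).eVariationOn_indicator_one_le s)
          ((isUpperSet_Ici b).eVariationOn_indicator_one_le s)
      _ = 2 := one_add_one_eq_two

def HasCorrelationDecay (X : Set ℝ) (μ : Measure ℝ) (T : ℝ → ℝ) (p : ℕ → ℝ) : Prop :=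
  ∀ n : ℕ, 1 ≤ n → ∀ f g : ℝ → ℝ, Integrable f μ → eVariationOn g X ≠ ∞ →
    |(∫ x, f (T^[n] x) * g x ∂μ) - (∫ x, f x ∂μ) * ∫ x, g x ∂μ| ≤
      (∫ x, |f x| ∂μ) * bvNorm X μ g * p n

lemma iInter_lt_succ_preimage_iterate_mul {α : Type*} (T : α → α) (s K : ℕ) (E : Set α) :
    ⋂ i < K + 1, T^[i * s] ⁻¹' E = E ∩ T^[s] ⁻¹' ⋂ i < K, T^[i * s] ⁻¹' E := by
  ext x
  simp only [mem_iInter, mem_inter_iff, mem_preimage, Nat.forall_lt_succ_left, zero_mul,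
    Function.iterate_zero, id, add_one_mul, Function.iterate_add_apply]

lemma setOf_forall_lt_iterate_notMem_subset {α : Type*} (T : α → α) (E : Set α) {m s : ℕ}
    (hs : 1 ≤ s) : {x | ∀ k < m, T^[k] x ∉ E} ⊆ ⋂ i < m / s, T^[i * s] ⁻¹' Eᶜ := by
  intro x hx
  simp only [mem_iInter]
  intro i hi
  exact hx _ (by have := (Nat.lt_div_iff_mul_lt hs).1 hi; omega)

lemma abs_indicator_one {α : Type*} (E : Set α) (x : α) :
    |E.indicator (1 : α → ℝ) x| = E.indicator 1 x :=
  abs_of_nonneg (indicator_nonneg (fun _ _ => zero_le_one) x)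

section Mixing

variable {X : Set ℝ} {μ : Measure ℝ} [IsProbabilityMeasure μ] {T : ℝ → ℝ} {p : ℕ → ℝ}

lemma bvNorm_indicator_one_le {E : Set ℝ} (hE : MeasurableSet E)
    (hvar : eVariationOn (E.indicator (1 : ℝ → ℝ)) X ≤ 2) :
    bvNorm X μ (E.indicator 1) ≤ 3 := by
  have hvar' : (eVariationOn (E.indicator (1 : ℝ → ℝ)) X).toReal ≤ 2 :=
    ENNReal.toReal_le_of_le_ofReal zero_le_two (by simpa using hvar)
  have hint : ∫ x, |E.indicator (1 : ℝ → ℝ) x| ∂μ ≤ 1 := by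
    simp_rw [abs_indicator_one, integral_indicator_one hE]
    exact measureReal_le_one
  rw [bvNorm]
  linarith

lemma measureReal_compl_inter_preimage_le (hcorr : HasCorrelationDecay X μ T p)
    (hT : MeasurePreserving T μ μ) {s : ℕ} (hs : 1 ≤ s) {Q : ℝ} (hQ : 0 ≤ Q)
    (hpQ : p s ≤ Q) {D E : Set ℝ} (hD : MeasurableSet D) (hE : MeasurableSet E)
    (hvar : eVariationOn (E.indicator (1 : ℝ → ℝ)) X ≤ 2) :
    μ.real (Eᶜ ∩ T^[s] ⁻¹' D) ≤ μ.real D * (1 - μ.real E + 3 * Q) := by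
  have hDs : MeasurableSet (T^[s] ⁻¹' D) := hT.measurable.iterate s hD
  have hcor := hcorr s hs (D.indicator 1) (E.indicator 1)
    ((integrable_const 1).indicator hD) (ne_top_of_le_ne_top ENNReal.ofNat_ne_top hvar)
  have hprod : (fun x => D.indicator (1 : ℝ → ℝ) (T^[s] x) * E.indicator 1 x)
      = (T^[s] ⁻¹' D ∩ E).indicator 1 := by
    rw [inter_indicator_one]
    rfl
  simp_rw [abs_indicator_one] at hcor
  rw [hprod, integral_indicator_one (hDs.inter hE), integral_indicator_one hD,
    integral_indicator_one hE] at hcor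
  have hbv := bvNorm_indicator_one_le (μ := μ) hE hvar
  have hbv0 : 0 ≤ bvNorm X μ (E.indicator 1) :=
    add_nonneg ENNReal.toReal_nonneg (integral_nonneg fun _ => abs_nonneg _)
  have herr : μ.real D * bvNorm X μ (E.indicator 1) * p s ≤ μ.real D * (3 * Q) := by
    rw [mul_assoc]
    refine mul_le_mul_of_nonneg_left ?_ measureReal_nonneg
    calc bvNorm X μ (E.indicator 1) * p s ≤ bvNorm X μ (E.indicator 1) * Q := by gcongr
      _ ≤ 3 * Q := by gcongr
  have hsplit : μ.real (Eᶜ ∩ T^[s] ⁻¹' D) = μ.real D - μ.real (T^[s] ⁻¹' D ∩ E) := by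
    rw [← (hT.iterate s).measureReal_preimage hD.nullMeasurableSet,
      ← measureReal_inter_add_sdiff (s := T^[s] ⁻¹' D) hE, inter_comm, ← sdiff_eq]
    ring
  rw [hsplit]
  linarith [(abs_le.1 hcor).1]

lemma measureReal_iInter_preimage_compl_le (hcorr : HasCorrelationDecay X μ T p)
    (hT : MeasurePreserving T μ μ) {s : ℕ} (hs : 1 ≤ s) {Q : ℝ} (hQ : 0 ≤ Q)
    (hpQ : p s ≤ Q) {E : Set ℝ} (hE : MeasurableSet E)
    (hvar : eVariationOn (E.indicator (1 : ℝ → ℝ)) X ≤ 2) (K : ℕ) :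
    μ.real (⋂ i < K, T^[i * s] ⁻¹' Eᶜ) ≤ Real.exp (-((μ.real E - 3 * Q) * K)) := by
  have hpow : ∀ n, μ.real (⋂ i < n, T^[i * s] ⁻¹' Eᶜ) ≤ (1 - μ.real E + 3 * Q) ^ n := by
    intro n
    induction n with
    | zero => simp
    | succ n ih =>
      have hmeas : MeasurableSet (⋂ i < n, T^[i * s] ⁻¹' Eᶜ) :=
        .iInter fun i => .iInter fun _ => hT.measurable.iterate _ hE.compl
      rw [iInter_lt_succ_preimage_iterate_mul, pow_succ']
      calc _ ≤ μ.real (⋂ i < n, T^[i * s] ⁻¹' Eᶜ) * (1 - μ.real E + 3 * Q) :=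
            measureReal_compl_inter_preimage_le hcorr hT hs hQ hpQ hmeas hE hvar
        _ ≤ _ := by
            rw [mul_comm]
            gcongr
            linarith [measureReal_le_one (μ := μ) (s := E)]
  calc _ ≤ (1 - μ.real E + 3 * Q) ^ K := hpow K
    _ ≤ Real.exp (-(μ.real E - 3 * Q)) ^ K := by
        gcongr
        · linarith [measureReal_le_one (μ := μ) (s := E)]
        · linarith [Real.one_sub_le_exp_neg (μ.real E - 3 * Q)]
    _ = _ := by rw [← Real.exp_nat_mul]; ring_nf

end Mixing

lemma tendsto_div_natCeil_mul {a : ℝ} (ha : 0 < a) :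
    Tendsto (fun x : ℝ => x / ⌈a * x⌉₊) atTop (𝓝 a⁻¹) := by
  have h := ((tendsto_nat_ceil_div_atTop.comp (tendsto_id.const_mul_atTop ha)).inv₀
    one_ne_zero).const_mul a⁻¹
  rw [inv_one, mul_one] at h
  refine h.congr' ?_
  filter_upwards [eventually_gt_atTop 0] with x hx
  simp only [Function.comp_apply, id, inv_div]
  field_simp

lemma eventually_mul_log_le_mul_div_natCeil {a β c : ℝ} (ha : 0 < a) (hc : 0 ≤ c)
    (hβ : β < c / a) :
    ∀ᶠ m : ℕ in atTop,
      β * Real.log m ≤ c * Real.log m ^ 2 / m * (m / ⌈a * Real.log m⌉₊ : ℕ) := by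
  have hlog : Tendsto (fun m : ℕ => Real.log m) atTop atTop :=
    Real.tendsto_log_atTop.comp tendsto_natCast_atTop_atTop
  have hlim : Tendsto (fun m : ℕ => c * (Real.log m / ⌈a * Real.log m⌉₊ - Real.log m / m))
      atTop (𝓝 (c / a)) := by
    have hlog_div : Tendsto (fun m : ℕ => Real.log m / m) atTop (𝓝 0) :=
      Real.isLittleO_log_id_atTop.tendsto_div_nhds_zero.comp tendsto_natCast_atTop_atTop
    have h := (((tendsto_div_natCeil_mul ha).comp hlog).sub hlog_div).const_mul c
    rwa [sub_zero, ← div_eq_mul_inv] at h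
  filter_upwards [hlim.eventually (eventually_ge_nhds hβ), hlog.eventually_gt_atTop 0,
    eventually_gt_atTop 0] with m hβm hlogm hm
  have hs : (0 : ℝ) < ⌈a * Real.log m⌉₊ := by
    exact_mod_cast Nat.ceil_pos.2 (mul_pos ha hlogm)
  have hK : (m : ℝ) / ⌈a * Real.log m⌉₊ - 1 ≤ (m / ⌈a * Real.log m⌉₊ : ℕ) := by
    rw [← Nat.floor_div_eq_div (K := ℝ)]
    exact (Nat.sub_one_lt_floor _).le
  calc β * Real.log m
      ≤ c * (Real.log m / ⌈a * Real.log m⌉₊ - Real.log m / m) * Real.log m := by gcongr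
    _ = c * Real.log m ^ 2 / m * ((m : ℝ) / ⌈a * Real.log m⌉₊ - 1) := by
        field_simp
    _ ≤ _ := by gcongr

lemma measure_eahSet_eq_one_of_summable {α : Type*} [MeasurableSpace α] {μ : Measure α}
    [IsProbabilityMeasure μ] {T : α → α} {B : ℕ → Set α}
    (h : Summable fun m => μ.real {x | ∀ k < m, T^[k] x ∉ B m}) : μ (eahSet T B) = 1 := by
  have hsum : ∑' m, μ {x | ∀ k < m, T^[k] x ∉ B m} ≠ ∞ := by
    convert ENNReal.ofReal_ne_top (r := ∑' m, μ.real {x | ∀ k < m, T^[k] x ∉ B m})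
    rw [ENNReal.ofReal_tsum_of_nonneg (fun _ => measureReal_nonneg) h]
    exact tsum_congr fun m => (ofReal_measureReal (measure_ne_top μ _)).symm
  have hcompl : (eahSet T B)ᶜ ⊆ limsup (fun m => {x | ∀ k < m, T^[k] x ∉ B m}) atTop := by
    intro x hx
    simp only [eahSet, mem_compl_iff, mem_ofPred_eq] at hx
    push Not at hx
    rw [mem_limsup_iff_frequently_mem, frequently_atTop]
    exact hx
  have hnull : μ (eahSet T B)ᶜ = 0 :=
    measure_mono_null hcompl (measure_limsup_atTop_eq_zero hsum)
  rw [measure_congr (ae_eq_univ.2 hnull), measure_univ]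

section ExponentialMixing

variable {X : Set ℝ} {μ : Measure ℝ} [IsProbabilityMeasure μ] {T : ℝ → ℝ} {p : ℕ → ℝ}
  {C τ a : ℝ}

lemma measureReal_setOf_forall_lt_iterate_notMem_le (hcorr : HasCorrelationDecay X μ T p)
    (hT : MeasurePreserving T μ μ) (hC : 0 ≤ C) (hτ : 0 < τ)
    (hp : ∀ n : ℕ, 1 ≤ n → p n ≤ C * Real.exp (-τ * n)) (hτa : 1 ≤ τ * a) {m : ℕ} (hm : 2 ≤ m)
    {E : Set ℝ} (hE : MeasurableSet E) (hvar : eVariationOn (E.indicator (1 : ℝ → ℝ)) X ≤ 2) :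
    μ.real {x | ∀ k < m, T^[k] x ∉ E} ≤
      Real.exp (3 * C) * Real.exp (-(μ.real E * (m / ⌈a * Real.log m⌉₊ : ℕ))) := by
  set s := ⌈a * Real.log m⌉₊
  set K := m / s
  have hm0 : (0 : ℝ) < m := by positivity
  have hlogm : 0 < Real.log m := Real.log_pos (by exact_mod_cast hm)
  have ha : 0 < a := pos_of_mul_pos_right (one_pos.trans_le hτa) hτ.le
  have hs : 1 ≤ s := Nat.one_le_iff_ne_zero.2 (Nat.ceil_pos.2 (mul_pos ha hlogm)).ne'
  set Q := C * Real.exp (-τ * s) with hQdef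
  -- `τ s ≥ τ a log m ≥ log m` gives `Q ≤ C / m`, and there are only `K ≤ m` blocks.
  have hQK : Q * K ≤ C := by
    have hQ : Q ≤ C / m := by
      rw [hQdef, div_eq_mul_inv, ← Real.exp_log hm0, ← Real.exp_neg]
      gcongr
      nlinarith [Nat.le_ceil (a * Real.log m)]
    have hK : (K : ℝ) ≤ m := by exact_mod_cast Nat.div_le_self m s
    calc Q * K ≤ C / m * m := by gcongr
      _ = C := by field_simp
  calc μ.real {x | ∀ k < m, T^[k] x ∉ E}
      ≤ μ.real (⋂ i < K, T^[i * s] ⁻¹' Eᶜ) :=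
        measureReal_mono (setOf_forall_lt_iterate_notMem_subset T E hs)
    _ ≤ Real.exp (-((μ.real E - 3 * Q) * K)) :=
        measureReal_iInter_preimage_compl_le hcorr hT hs (by positivity) (hp s hs) hE hvar K
    _ ≤ Real.exp (3 * C) * Real.exp (-(μ.real E * K)) := by
        rw [← Real.exp_add]
        gcongr
        linarith

end ExponentialMixing

theorem eah_full_exp_mixing_general
    (X : Set ℝ) (hX : X.OrdConnected)
    (μ : Measure ℝ) [IsProbabilityMeasure μ]
    (T : ℝ → ℝ) (hT : MeasurePreserving T μ μ)
    (p : ℕ → ℝ) (C τ : ℝ) (hC : 0 ≤ C) (hτ : 0 < τ)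
    (hp : ∀ n : ℕ, 1 ≤ n → p n ≤ C * Real.exp (-τ * n))
    (hcorr : ∀ n : ℕ, 1 ≤ n → ∀ f g : ℝ → ℝ, Integrable f μ →
      eVariationOn g X ≠ ∞ →
      |(∫ x, f (T^[n] x) * g x ∂μ) - (∫ x, f x ∂μ) * ∫ x, g x ∂μ| ≤
        (∫ x, |f x| ∂μ) * bvNorm X μ g * p n)
    (y : ℕ → ℝ) (r : ℕ → ℝ)
    (B : ℕ → Set ℝ) (hB : ∀ m, B m = Metric.ball (y m) (r m) ∩ X)
    (c : ℝ) (hc : 1 / τ < c)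
    (hbig : ∃ M : ℕ, ∀ m : ℕ, M ≤ m →
      ENNReal.ofReal (c * (Real.log m) ^ 2 / m) ≤ μ (B m)) :
    μ (eahSet T B) = 1 := by
  obtain ⟨M, hM⟩ := hbig
  obtain ⟨a, hτa, hac⟩ := exists_between hc
  have ha : 0 < a := (one_div_pos.2 hτ).trans hτa
  obtain ⟨β, hβ, hβa⟩ := exists_between ((one_lt_div ha).2 hac)
  have hmeas : ∀ m, MeasurableSet (B m) := fun m =>
    hB m ▸ measurableSet_ball.inter hX.measurableSet
  have hvar : ∀ m, eVariationOn ((B m).indicator (1 : ℝ → ℝ)) X ≤ 2 := fun m => by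
    have hBX : EqOn ((B m).indicator (1 : ℝ → ℝ))
        ((Ioo (y m - r m) (y m + r m)).indicator 1) X := fun x hx => by
      simp [hB m, ← Real.ball_eq_Ioo, indicator, hx]
    exact (eVariationOn.congr hBX).trans_le (eVariationOn_indicator_Ioo_le _ _ X)
  refine measure_eahSet_eq_one_of_summable <| .of_norm_bounded_eventually_nat
    ((Real.summable_nat_rpow.2 (by linarith : -β < -1)).mul_left (Real.exp (3 * C))) ?_
  filter_upwards [eventually_mul_log_le_mul_div_natCeil ha (ha.trans hac).le hβa,
    eventually_ge_atTop (max M 2)] with m hK hm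
  have hm0 : (0 : ℝ) < m := by have := le_of_max_le_right hm; positivity
  have hBm : c * Real.log m ^ 2 / m ≤ μ.real (B m) :=
    (ENNReal.ofReal_le_iff_le_toReal (measure_ne_top μ _)).1 (hM m (le_of_max_le_left hm))
  rw [Real.norm_of_nonneg measureReal_nonneg, Real.rpow_def_of_pos hm0]
  calc _ ≤ _ := measureReal_setOf_forall_lt_iterate_notMem_le hcorr hT hC hτ hp
        ((div_lt_iff₀' hτ).1 hτa).le
        (le_of_max_le_right hm) (hmeas m) (hvar m)
    _ ≤ Real.exp (3 * C) * Real.exp (Real.log m * -β) := by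
        have := mul_le_mul_of_nonneg_right hBm (Nat.cast_nonneg (α := ℝ) (m / ⌈a * Real.log m⌉₊))
        gcongr
        linarith

/-- Exponential decay of correlations for `L¹` against `BV` implies that the set of
eventually always hitting points has full measure, provided
`μ (B m) ≥ c (log m)² / m` with `c > 1/τ` for all sufficiently large `m`. -/
theorem eah_full_exp_mixing
    (X : Set ℝ) (hX : X.OrdConnected)
    (μ : Measure ℝ) [IsProbabilityMeasure μ] (hsupp : μ Xᶜ = 0)
    (T : ℝ → ℝ) (hT : MeasurePreserving T μ μ)
    (p : ℕ → ℝ) (C τ : ℝ) (hC : 0 ≤ C) (hτ : 0 < τ)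
    (hp : ∀ n : ℕ, 1 ≤ n → p n ≤ C * Real.exp (-τ * n))
    (hcorr : ∀ n : ℕ, 1 ≤ n → ∀ f g : ℝ → ℝ, Integrable f μ →
      eVariationOn g X ≠ ∞ →
      |(∫ x, f (T^[n] x) * g x ∂μ) - (∫ x, f x ∂μ) * ∫ x, g x ∂μ| ≤
        (∫ x, |f x| ∂μ) * bvNorm X μ g * p n)
    (y : ℕ → ℝ) (hy : ∀ m, y m ∈ X) (r : ℕ → ℝ) (hr : ∀ m, 0 ≤ r m)
    (B : ℕ → Set ℝ) (hB : ∀ m, B m = Metric.ball (y m) (r m) ∩ X)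
    (hlim : Tendsto (fun m => μ (B m)) atTop (nhds 0))
    (c : ℝ) (hc : 1 / τ < c)
    (hbig : ∃ M : ℕ, ∀ m : ℕ, M ≤ m →
      ENNReal.ofReal (c * (Real.log m) ^ 2 / m) ≤ μ (B m)) :
    μ (eahSet T B) = 1 :=
  eah_full_exp_mixing_general X hX μ T hT p C τ hC hτ hp hcorr y r B hB c hc hbig
end
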